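/- arXiv:2102.02710 — 5 statements merged into one kernel-verified Lean document; each statement's English description precedes it below -/
import Mathlib

section
/- Suppose every demand patience distribution G_j^D (j ∈ J) and every supply patience distribution G_k^S (k ∈ K) has a nondecreasing hazard rate on its support. Then for every j ∈ J and every k ∈ K the invariant queue-length functions m ↦ q*_j(m) and m ↦ i*_k(m) are concave on the feasible set 𝕄(λ,μ); moreover, if the hazard rates are strictly increasing, then for each j the aggregate map s ↦ (λ_j/θ_j^D)·G^D_{e,j}((G_j^D)^{-1}(1 − s/λ_j)) is strictly concave on (0, λ_j], and similarly for each k on (0, μ_k]. If instead every hazard rate is nonincreasing (respectively strictly decreasing), the same functions are convex on 𝕄(λ,μ) (respectively strictly convex in the aggregate rate). -/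
open MeasureTheory

/-- A patience time distribution: a cdf `G` on `[0,∞)` with `G 0 = 0`, density `g`,
finite mean `1/θ`, strictly increasing from its support onto `[0,1)`. -/
structure PatienceDist where
  G : ℝ → ℝ
  g : ℝ → ℝ
  θ : ℝ
  theta_pos : 0 < θ
  G_zero : G 0 = 0
  mono : Monotone G
  nonneg : ∀ x, 0 ≤ G x
  le_one : ∀ x, G x ≤ 1
  g_nonneg : ∀ x, 0 ≤ g x
  density : ∀ x, 0 ≤ x → G x = ∫ u in (0:ℝ)..x, g u
  mean : (∫ u in Set.Ioi (0:ℝ), (1 - G u)) = 1 / θ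
  strictMono_support : ∀ ⦃x y : ℝ⦄, 0 ≤ x → x < y → G y < 1 → G x < G y
  surj_support : ∀ y, 0 ≤ y → y < 1 → ∃ x, 0 ≤ x ∧ G x = y

namespace PatienceDist

/-- The inverse of the cdf from `[0,1)` onto the support. -/
noncomputable def inv (P : PatienceDist) (y : ℝ) : ℝ :=
  sInf {x | 0 ≤ x ∧ P.G x = y}

/-- The excess life distribution `G_e(x) = θ ∫₀ˣ (1 - G u) du`. -/
noncomputable def Ge (P : PatienceDist) (x : ℝ) : ℝ :=
  P.θ * ∫ u in (0:ℝ)..x, (1 - P.G u)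

/-- The hazard rate `h(x) = g(x) / (1 - G(x))`. -/
noncomputable def hazard (P : PatienceDist) (x : ℝ) : ℝ :=
  P.g x / (1 - P.G x)

/-- The hazard rate is nondecreasing on the support. -/
def HazardNondec (P : PatienceDist) : Prop :=
  ∀ ⦃x y : ℝ⦄, 0 ≤ x → x ≤ y → P.G y < 1 → P.hazard x ≤ P.hazard y

/-- The hazard rate is strictly increasing on the support. -/
def HazardStrictInc (P : PatienceDist) : Prop :=
  ∀ ⦃x y : ℝ⦄, 0 ≤ x → x < y → P.G y < 1 → P.hazard x < P.hazard y

/-- The hazard rate is nonincreasing on the support. -/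
def HazardNoninc (P : PatienceDist) : Prop :=
  ∀ ⦃x y : ℝ⦄, 0 ≤ x → x ≤ y → P.G y < 1 → P.hazard y ≤ P.hazard x

/-- The hazard rate is strictly decreasing on the support. -/
def HazardStrictDec (P : PatienceDist) : Prop :=
  ∀ ⦃x y : ℝ⦄, 0 ≤ x → x < y → P.G y < 1 → P.hazard y < P.hazard x

variable (P : PatienceDist)

lemma oneSubG_nonneg (u : ℝ) : 0 ≤ 1 - P.G u := by linarith [P.le_one u]

lemma gInt_Ioc_of_pos {x : ℝ} (hx : 0 ≤ x) (hG : 0 < P.G x) :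
    IntegrableOn P.g (Set.Ioc 0 x) := by
  by_contra h
  have hd := P.density x hx
  rw [intervalIntegral.integral_of_le hx, MeasureTheory.integral_undef h] at hd
  linarith

lemma gInt_Ioc (x : ℝ) : IntegrableOn P.g (Set.Ioc 0 x) := by
  obtain ⟨z, hz0, hGz⟩ := P.surj_support (1/2) (by norm_num) (by norm_num)
  have hGzpos : 0 < P.G z := by rw [hGz]; norm_num
  rcases le_total x z with h | h
  · exact (P.gInt_Ioc_of_pos hz0 hGzpos).mono_set (Set.Ioc_subset_Ioc_right h)
  · exact P.gInt_Ioc_of_pos (hz0.trans h) (hGzpos.trans_le (P.mono h))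

lemma int_g_Ioc {x : ℝ} (hx : 0 ≤ x) : ∫ u in Set.Ioc 0 x, P.g u = P.G x := by
  rw [P.density x hx, intervalIntegral.integral_of_le hx]

lemma oneSubG_int_Ioi : IntegrableOn (fun u => 1 - P.G u) (Set.Ioi 0) := by
  by_contra h
  have hm := P.mean
  rw [MeasureTheory.integral_undef h] at hm
  have : (0:ℝ) < 1 / P.θ := one_div_pos.mpr P.theta_pos
  linarith

lemma gInt_Ioi : IntegrableOn P.g (Set.Ioi 0) := by
  apply MeasureTheory.integrableOn_Ioi_of_intervalIntegral_norm_bounded 1 0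
    (fun i => P.gInt_Ioc i) (Filter.tendsto_id (α := ℝ))
  filter_upwards [Filter.eventually_ge_atTop (0:ℝ)] with i hi
  have h1 : ∫ x in (0:ℝ)..i, ‖P.g x‖ = P.G i := by
    rw [← P.int_g_Ioc hi, intervalIntegral.integral_of_le hi]
    exact setIntegral_congr_fun measurableSet_Ioc fun u _ => abs_of_nonneg (P.g_nonneg u)
  rw [h1]; exact P.le_one i

lemma int_g_Ioi_le_one : ∫ u in Set.Ioi (0:ℝ), P.g u ≤ 1 := by
  have ht := MeasureTheory.intervalIntegral_tendsto_integral_Ioi 0 P.gInt_Ioi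
    (Filter.tendsto_id (α := ℝ))
  refine le_of_tendsto ht ?_
  filter_upwards [Filter.eventually_ge_atTop (0:ℝ)] with i hi
  show ∫ x in (0:ℝ)..i, P.g x ≤ 1
  rw [intervalIntegral.integral_of_le hi, P.int_g_Ioc hi]; exact P.le_one i

lemma oneSubG_int_Ioc {a b : ℝ} (ha : 0 ≤ a) :
    IntegrableOn (fun u => 1 - P.G u) (Set.Ioc a b) :=
  P.oneSubG_int_Ioi.mono_set (Set.Ioc_subset_Ioi_self.trans (Set.Ioi_subset_Ioi ha))

lemma oneSubG_int_Ioi' {a : ℝ} (ha : 0 ≤ a) :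
    IntegrableOn (fun u => 1 - P.G u) (Set.Ioi a) :=
  P.oneSubG_int_Ioi.mono_set (Set.Ioi_subset_Ioi ha)

lemma int_g_split {a b : ℝ} (ha : 0 ≤ a) (hab : a ≤ b) :
    ∫ u in Set.Ioc a b, P.g u = P.G b - P.G a := by
  have hu : Set.Ioc 0 a ∪ Set.Ioc a b = Set.Ioc 0 b := Set.Ioc_union_Ioc_eq_Ioc ha hab
  have hthis := MeasureTheory.setIntegral_union (Set.Ioc_disjoint_Ioc_of_le le_rfl) measurableSet_Ioc
    (P.gInt_Ioc a) ((P.gInt_Ioc b).mono_set (Set.Ioc_subset_Ioc_left ha))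
  rw [hu, P.int_g_Ioc (ha.trans hab), P.int_g_Ioc ha] at hthis
  linarith

lemma int_oneSubG_split {a b : ℝ} (ha : 0 ≤ a) (hab : a ≤ b) :
    ∫ u in Set.Ioc a b, (1 - P.G u) =
      (∫ u in Set.Ioi a, (1 - P.G u)) - ∫ u in Set.Ioi b, (1 - P.G u) := by
  have hu : Set.Ioc a b ∪ Set.Ioi b = Set.Ioi a := Set.Ioc_union_Ioi_eq_Ioi hab
  have hthis := MeasureTheory.setIntegral_union (Set.Ioc_disjoint_Ioi le_rfl) measurableSet_Ioi
    (P.oneSubG_int_Ioc ha) (P.oneSubG_int_Ioi' (ha.trans hab))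
  rw [hu] at hthis
  linarith

lemma int_g_tail_le {b : ℝ} (hb : 0 ≤ b) : ∫ u in Set.Ioi b, P.g u ≤ 1 - P.G b := by
  have hu : Set.Ioc 0 b ∪ Set.Ioi b = Set.Ioi 0 := Set.Ioc_union_Ioi_eq_Ioi hb
  have hthis := MeasureTheory.setIntegral_union (Set.Ioc_disjoint_Ioi le_rfl) measurableSet_Ioi
    (P.gInt_Ioc b) (P.gInt_Ioi.mono_set (Set.Ioi_subset_Ioi hb))
  rw [hu, P.int_g_Ioc hb] at hthis
  have := P.int_g_Ioi_le_one
  linarith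

lemma int_oneSubG_nonneg (s : Set ℝ) (hs : MeasurableSet s) :
    0 ≤ ∫ u in s, (1 - P.G u) :=
  MeasureTheory.setIntegral_nonneg hs fun u _ => P.oneSubG_nonneg u

lemma int_oneSubG_pos {a b : ℝ} (ha : 0 ≤ a) (hab : a < b) (hGb : P.G b < 1) :
    0 < ∫ u in Set.Ioc a b, (1 - P.G u) := by
  have hmono : ∀ u ∈ Set.Ioc a b, (1 - P.G b) ≤ 1 - P.G u := fun u hu => by
    have := P.mono hu.2; linarith
  have hconst : IntegrableOn (fun _ : ℝ => 1 - P.G b) (Set.Ioc a b) :=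
    integrableOn_const measure_Ioc_lt_top.ne
  have h1 := MeasureTheory.setIntegral_mono_on hconst (P.oneSubG_int_Ioc ha)
    measurableSet_Ioc hmono
  rw [MeasureTheory.setIntegral_const, Real.volume_real_Ioc_of_le hab.le,
    smul_eq_mul] at h1
  nlinarith

lemma int_g_pos {a b : ℝ} (ha : 0 ≤ a) (hab : a < b) (hGb : P.G b < 1) :
    0 < ∫ u in Set.Ioc a b, P.g u := by
  rw [P.int_g_split ha hab.le]
  have := P.strictMono_support ha hab hGb
  linarith

lemma int_g_nonneg (s : Set ℝ) (hs : MeasurableSet s) : 0 ≤ ∫ u in s, P.g u :=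
  MeasureTheory.setIntegral_nonneg hs fun u _ => P.g_nonneg u

lemma hazard_nonneg {x : ℝ} (h : P.G x < 1) : 0 ≤ P.hazard x :=
  div_nonneg (P.g_nonneg x) (by linarith)

lemma g_eq_hazard {u : ℝ} (h : P.G u < 1) : P.g u = P.hazard u * (1 - P.G u) := by
  rw [PatienceDist.hazard, div_mul_cancel₀]
  intro hc; rw [sub_eq_zero] at hc; exact absurd hc.symm h.ne

lemma int_le_of_pointwise {a b β : ℝ} (ha : 0 ≤ a)
    (h : ∀ u ∈ Set.Ioc a b, P.g u ≤ β * (1 - P.G u)) :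
    ∫ u in Set.Ioc a b, P.g u ≤ β * ∫ u in Set.Ioc a b, (1 - P.G u) := by
  rw [← MeasureTheory.integral_const_mul]
  exact MeasureTheory.setIntegral_mono_on
    ((P.gInt_Ioc b).mono_set (Set.Ioc_subset_Ioc_left ha))
    ((P.oneSubG_int_Ioc ha).const_mul β) measurableSet_Ioc h

lemma int_ge_of_pointwise {a b β : ℝ} (ha : 0 ≤ a)
    (h : ∀ u ∈ Set.Ioc a b, β * (1 - P.G u) ≤ P.g u) :
    β * ∫ u in Set.Ioc a b, (1 - P.G u) ≤ ∫ u in Set.Ioc a b, P.g u := by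
  rw [← MeasureTheory.integral_const_mul]
  exact MeasureTheory.setIntegral_mono_on
    ((P.oneSubG_int_Ioc ha).const_mul β)
    ((P.gInt_Ioc b).mono_set (Set.Ioc_subset_Ioc_left ha)) measurableSet_Ioc h

/-- nondecreasing hazard, left interval -/
lemma haz_left (hH : P.HazardNondec) {a b : ℝ} (ha : 0 ≤ a) (hab : a ≤ b) (hGb : P.G b < 1) :
    ∫ u in Set.Ioc a b, P.g u ≤ P.hazard b * ∫ u in Set.Ioc a b, (1 - P.G u) :=
  P.int_le_of_pointwise ha fun u hu => by
    have hGu : P.G u < 1 := lt_of_le_of_lt (P.mono hu.2) hGb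
    rw [P.g_eq_hazard hGu]
    exact mul_le_mul_of_nonneg_right (hH (ha.trans hu.1.le) hu.2 hGb) (P.oneSubG_nonneg u)

/-- nondecreasing hazard, right interval -/
lemma haz_right (hH : P.HazardNondec) {b c : ℝ} (hb : 0 ≤ b) (hbc : b ≤ c) (hGc : P.G c < 1) :
    P.hazard b * ∫ u in Set.Ioc b c, (1 - P.G u) ≤ ∫ u in Set.Ioc b c, P.g u :=
  P.int_ge_of_pointwise hb fun u hu => by
    have hGu : P.G u < 1 := lt_of_le_of_lt (P.mono hu.2) hGc
    rw [P.g_eq_hazard hGu]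
    exact mul_le_mul_of_nonneg_right (hH hb hu.1.le hGu) (P.oneSubG_nonneg u)

/-- nonincreasing hazard, left interval -/
lemma haz_left' (hH : P.HazardNoninc) {a b : ℝ} (ha : 0 ≤ a) (hab : a ≤ b) (hGb : P.G b < 1) :
    P.hazard b * ∫ u in Set.Ioc a b, (1 - P.G u) ≤ ∫ u in Set.Ioc a b, P.g u :=
  P.int_ge_of_pointwise ha fun u hu => by
    have hGu : P.G u < 1 := lt_of_le_of_lt (P.mono hu.2) hGb
    rw [P.g_eq_hazard hGu]
    exact mul_le_mul_of_nonneg_right (hH (ha.trans hu.1.le) hu.2 hGb) (P.oneSubG_nonneg u)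

/-- nonincreasing hazard, right interval -/
lemma haz_right' (hH : P.HazardNoninc) {b c : ℝ} (hb : 0 ≤ b) (hbc : b ≤ c) (hGc : P.G c < 1) :
    ∫ u in Set.Ioc b c, P.g u ≤ P.hazard b * ∫ u in Set.Ioc b c, (1 - P.G u) :=
  P.int_le_of_pointwise hb fun u hu => by
    have hGu : P.G u < 1 := lt_of_le_of_lt (P.mono hu.2) hGc
    rw [P.g_eq_hazard hGu]
    exact mul_le_mul_of_nonneg_right (hH hb hu.1.le hGu) (P.oneSubG_nonneg u)

/-- nondecreasing hazard, tail bound -/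
lemma haz_tail_le (hH : P.HazardNondec) {b : ℝ} (hb : 0 ≤ b) (hGb : P.G b < 1) :
    P.hazard b * ∫ u in Set.Ioi b, (1 - P.G u) ≤ 1 - P.G b := by
  have h1 : P.hazard b * ∫ u in Set.Ioi b, (1 - P.G u) ≤ ∫ u in Set.Ioi b, P.g u := by
    rw [← MeasureTheory.integral_const_mul]
    refine MeasureTheory.setIntegral_mono_on ((P.oneSubG_int_Ioi' hb).const_mul _)
      (P.gInt_Ioi.mono_set (Set.Ioi_subset_Ioi hb)) measurableSet_Ioi ?_
    intro u hu
    rcases lt_or_ge (P.G u) 1 with h | h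
    · rw [P.g_eq_hazard h]
      exact mul_le_mul_of_nonneg_right (hH hb (le_of_lt hu) h) (P.oneSubG_nonneg u)
    · have hGu : P.G u = 1 := le_antisymm (P.le_one u) h
      rw [hGu]; simpa using P.g_nonneg u
  exact h1.trans (P.int_g_tail_le hb)

lemma nondec_of_strictInc (hH : P.HazardStrictInc) : P.HazardNondec := by
  intro x y hx hxy hGy
  rcases eq_or_lt_of_le hxy with rfl | h
  · exact le_rfl
  · exact (hH hx h hGy).le

lemma noninc_of_strictDec (hH : P.HazardStrictDec) : P.HazardNoninc := by
  intro x y hx hxy hGy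
  rcases eq_or_lt_of_le hxy with rfl | h
  · exact le_rfl
  · exact (hH hx h hGy).le

lemma int_oneSubG_add {b m c : ℝ} (hb : 0 ≤ b) (hbm : b ≤ m) (hmc : m ≤ c) :
    ∫ u in Set.Ioc b c, (1 - P.G u) =
      (∫ u in Set.Ioc b m, (1 - P.G u)) + ∫ u in Set.Ioc m c, (1 - P.G u) := by
  rw [P.int_oneSubG_split hb (hbm.trans hmc), P.int_oneSubG_split hb hbm,
    P.int_oneSubG_split (hb.trans hbm) hmc]
  ring

/-- strictly increasing hazard: strict right-interval bound -/
lemma haz_right_strict (hH : P.HazardStrictInc) {b c : ℝ} (hb : 0 ≤ b) (hbc : b < c)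
    (hGc : P.G c < 1) :
    P.hazard b * ∫ u in Set.Ioc b c, (1 - P.G u) < ∫ u in Set.Ioc b c, P.g u := by
  set m := (b + c) / 2 with hm
  have hbm : b < m := by rw [hm]; linarith
  have hmc : m < c := by rw [hm]; linarith
  have hGm : P.G m < 1 := lt_of_le_of_lt (P.mono hmc.le) hGc
  have h1 := P.haz_right (P.nondec_of_strictInc hH) hb hbm.le hGm
  have h2 := P.haz_right (P.nondec_of_strictInc hH) (hb.trans hbm.le) hmc.le hGc
  have hlt : P.hazard b < P.hazard m := hH hb hbm hGm
  have hpos : 0 < ∫ u in Set.Ioc m c, (1 - P.G u) :=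
    P.int_oneSubG_pos (hb.trans hbm.le) hmc hGc
  have hsg : ∫ u in Set.Ioc b c, P.g u
      = (∫ u in Set.Ioc b m, P.g u) + ∫ u in Set.Ioc m c, P.g u := by
    rw [P.int_g_split hb (hbm.trans hmc).le, P.int_g_split hb hbm.le,
      P.int_g_split (hb.trans hbm.le) hmc.le]
    ring
  have hs1 := P.int_oneSubG_add hb hbm.le hmc.le
  have hmul : P.hazard b * ∫ u in Set.Ioc m c, (1 - P.G u)
      < P.hazard m * ∫ u in Set.Ioc m c, (1 - P.G u) :=
    mul_lt_mul_of_pos_right hlt hpos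
  rw [hsg, hs1, mul_add]
  linarith

/-- strictly decreasing hazard: strict right-interval bound -/
lemma haz_right_strict' (hH : P.HazardStrictDec) {b c : ℝ} (hb : 0 ≤ b) (hbc : b < c)
    (hGc : P.G c < 1) :
    ∫ u in Set.Ioc b c, P.g u < P.hazard b * ∫ u in Set.Ioc b c, (1 - P.G u) := by
  set m := (b + c) / 2 with hm
  have hbm : b < m := by rw [hm]; linarith
  have hmc : m < c := by rw [hm]; linarith
  have hGm : P.G m < 1 := lt_of_le_of_lt (P.mono hmc.le) hGc
  have h1 := P.haz_right' (P.noninc_of_strictDec hH) hb hbm.le hGm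
  have h2 := P.haz_right' (P.noninc_of_strictDec hH) (hb.trans hbm.le) hmc.le hGc
  have hlt : P.hazard m < P.hazard b := hH hb hbm hGm
  have hpos : 0 < ∫ u in Set.Ioc m c, (1 - P.G u) :=
    P.int_oneSubG_pos (hb.trans hbm.le) hmc hGc
  have hsg : ∫ u in Set.Ioc b c, P.g u
      = (∫ u in Set.Ioc b m, P.g u) + ∫ u in Set.Ioc m c, P.g u := by
    rw [P.int_g_split hb (hbm.trans hmc).le, P.int_g_split hb hbm.le,
      P.int_g_split (hb.trans hbm.le) hmc.le]
    ring
  have hs1 := P.int_oneSubG_add hb hbm.le hmc.le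
  have hmul : P.hazard m * ∫ u in Set.Ioc m c, (1 - P.G u)
      < P.hazard b * ∫ u in Set.Ioc m c, (1 - P.G u) :=
    mul_lt_mul_of_pos_right hlt hpos
  rw [hsg, hs1, mul_add]
  linarith

/-- nonincreasing hazard: tail bound -/
lemma haz_tail_ge (hH : P.HazardNoninc) {b : ℝ} (hb : 0 ≤ b) (hGb : P.G b < 1) :
    1 - P.G b ≤ P.hazard b * ∫ u in Set.Ioi b, (1 - P.G u) := by
  have hT0 : 0 ≤ ∫ u in Set.Ioi b, (1 - P.G u) :=
    P.int_oneSubG_nonneg _ measurableSet_Ioi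
  have hβ : 0 ≤ P.hazard b := P.hazard_nonneg hGb
  refine le_of_forall_pos_le_add ?_
  intro ε hε
  set y := max (P.G b) (1 - ε) with hy
  obtain ⟨x, hx0, hGx⟩ := P.surj_support y (le_max_of_le_left (P.nonneg b))
    (max_lt hGb (by linarith))
  have hy1 : 1 - ε ≤ y := le_max_right _ _
  rcases le_or_gt b x with hbx | hxb
  · have h1 : ∫ u in Set.Ioc b x, P.g u ≤ P.hazard b * ∫ u in Set.Ioc b x, (1 - P.G u) :=
      P.haz_right' hH hb hbx (by rw [hGx]; exact max_lt hGb (by linarith))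
    rw [P.int_g_split hb hbx] at h1
    have h2 : ∫ u in Set.Ioc b x, (1 - P.G u) ≤ ∫ u in Set.Ioi b, (1 - P.G u) :=
      MeasureTheory.setIntegral_mono_set (P.oneSubG_int_Ioi' hb)
        (Filter.Eventually.of_forall fun u => P.oneSubG_nonneg u)
        (HasSubset.Subset.eventuallyLE Set.Ioc_subset_Ioi_self)
    have h3 : P.hazard b * ∫ u in Set.Ioc b x, (1 - P.G u)
        ≤ P.hazard b * ∫ u in Set.Ioi b, (1 - P.G u) :=
      mul_le_mul_of_nonneg_left h2 hβ
    rw [hGx] at h1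
    linarith
  · have hGxb : P.G x ≤ P.G b := P.mono hxb.le
    have : y = P.G b := le_antisymm (by rw [← hGx]; exact hGxb) (le_max_left _ _)
    have : 1 - P.G b ≤ ε := by rw [← this]; linarith
    nlinarith

lemma inv_spec {y : ℝ} (hy0 : 0 ≤ y) (hy1 : y < 1) :
    0 ≤ P.inv y ∧ P.G (P.inv y) = y := by
  obtain ⟨x₀, hx₀0, hGx₀⟩ := P.surj_support y hy0 hy1
  have hne : Set.Nonempty {x | 0 ≤ x ∧ P.G x = y} := ⟨x₀, hx₀0, hGx₀⟩
  have hbdd : BddBelow {x | 0 ≤ x ∧ P.G x = y} := ⟨0, fun x hx => hx.1⟩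
  have hι0 : 0 ≤ P.inv y := le_csInf hne fun x hx => hx.1
  have hιx₀ : P.inv y ≤ x₀ := csInf_le hbdd ⟨hx₀0, hGx₀⟩
  refine ⟨hι0, ?_⟩
  rcases eq_or_lt_of_le hy0 with hy | hy
  · have h0S : (0:ℝ) ∈ {x | 0 ≤ x ∧ P.G x = y} := ⟨le_rfl, by rw [P.G_zero, hy]⟩
    have h1 : P.inv y ≤ 0 := csInf_le hbdd h0S
    have hi : P.inv y = 0 := le_antisymm h1 hι0
    rw [hi, P.G_zero, hy]
  · -- y > 0
    have hcont : ContinuousOn P.G (Set.Icc 0 x₀) := by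
      have hint : IntegrableOn P.g (Set.Icc 0 x₀) := by
        rw [integrableOn_Icc_iff_integrableOn_Ioc]
        exact P.gInt_Ioc x₀
      refine (intervalIntegral.continuousOn_primitive hint).congr ?_
      intro x hx
      exact (P.int_g_Ioc hx.1).symm
    have hmem : P.inv y ∈ Set.Icc 0 x₀ := ⟨hι0, hιx₀⟩
    have hGι_le : P.G (P.inv y) ≤ y := by
      have h := P.mono hιx₀; rw [hGx₀] at h; exact h
    by_contra hne'
    have hGι : P.G (P.inv y) < y := lt_of_le_of_ne hGι_le hne'
    have hcw := hcont (P.inv y) hmem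
    rw [Metric.continuousWithinAt_iff] at hcw
    obtain ⟨δ, hδ, hball⟩ := hcw (y - P.G (P.inv y)) (by linarith)
    obtain ⟨x, hxS, hxlt⟩ := exists_lt_of_csInf_lt hne
      (show P.inv y < P.inv y + δ by linarith)
    set x' := min x x₀ with hx'
    have hx'S : x' ∈ {x | 0 ≤ x ∧ P.G x = y} := by
      rcases le_total x x₀ with h | h
      · rw [hx', min_eq_left h]; exact hxS
      · rw [hx', min_eq_right h]; exact ⟨hx₀0, hGx₀⟩
    have hx'mem : x' ∈ Set.Icc 0 x₀ := ⟨hx'S.1, min_le_right _ _⟩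
    have hιx' : P.inv y ≤ x' := csInf_le hbdd hx'S
    have hdist : dist x' (P.inv y) < δ := by
      rw [Real.dist_eq, abs_of_nonneg (by linarith)]
      have : x' ≤ x := min_le_left _ _
      linarith
    have := hball hx'mem hdist
    rw [Real.dist_eq, hx'S.2] at this
    have habs := le_abs_self (y - P.G (P.inv y))
    linarith [abs_lt.mp this]

lemma inv_spec' {lam s : ℝ} (hlam : 0 < lam) (hs : 0 < s) (hsl : s ≤ lam) :
    0 ≤ P.inv (1 - s / lam) ∧ P.G (P.inv (1 - s / lam)) = 1 - s / lam := by
  refine P.inv_spec ?_ ?_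
  · rw [sub_nonneg]; exact (div_le_one hlam).mpr hsl
  · have : 0 < s / lam := div_pos hs hlam
    linarith

end PatienceDist

/-- Invariant queue length as a function of the total matching rate `s`:
`λ/θ` if `s = 0`, and `(λ/θ) G_e (G⁻¹ (1 - s/λ))` otherwise. -/
noncomputable def qstarFun (lam : ℝ) (P : PatienceDist) (s : ℝ) : ℝ :=
  if s = 0 then lam / P.θ else (lam / P.θ) * P.Ge (P.inv (1 - s / lam))

/-- The feasible set of matching rates `𝕄(λ,μ)`. -/
def Mset {J K : Type*} [Fintype J] [Fintype K] (lam : J → ℝ) (mu : K → ℝ) :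
    Set (J × K → ℝ) :=
  {m | (∀ p, 0 ≤ m p) ∧ (∀ j, ∑ k : K, m (j, k) ≤ lam j) ∧
    (∀ k, ∑ j : J, m (j, k) ≤ mu k)}

namespace PatienceDist

lemma Ge_eq {x : ℝ} (P : PatienceDist) (hx : 0 ≤ x) :
    P.Ge x = P.θ * (1 / P.θ - ∫ u in Set.Ioi x, (1 - P.G u)) := by
  rw [PatienceDist.Ge, intervalIntegral.integral_of_le hx,
    P.int_oneSubG_split le_rfl hx, P.mean]

section Core

variable (P : PatienceDist) {a b c : ℝ}

/-- Concave core: for `a < b < c` in the support,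
`I(b,c) * Jg(a,b) ≤ I(a,b) * Jg(b,c)`. -/
lemma core_nondec (hH : P.HazardNondec) (ha : 0 ≤ a) (hab : a < b) (hbc : b < c)
    (hGc : P.G c < 1) :
    (∫ u in Set.Ioc b c, (1 - P.G u)) * ∫ u in Set.Ioc a b, P.g u
      ≤ (∫ u in Set.Ioc a b, (1 - P.G u)) * ∫ u in Set.Ioc b c, P.g u := by
  have hGb : P.G b < 1 := lt_of_le_of_lt (P.mono hbc.le) hGc
  have hL := P.haz_left hH ha hab.le hGb
  have hR := P.haz_right hH (ha.trans hab.le) hbc.le hGc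
  have hIab : 0 ≤ ∫ u in Set.Ioc a b, (1 - P.G u) := P.int_oneSubG_nonneg _ measurableSet_Ioc
  have hIbc : 0 ≤ ∫ u in Set.Ioc b c, (1 - P.G u) := P.int_oneSubG_nonneg _ measurableSet_Ioc
  nlinarith [mul_le_mul_of_nonneg_left hL hIbc, mul_le_mul_of_nonneg_right hR hIab]

lemma core_nondec_boundary (hH : P.HazardNondec) (ha : 0 ≤ a) (hab : a < b)
    (hGb : P.G b < 1) :
    (∫ u in Set.Ioi b, (1 - P.G u)) * ∫ u in Set.Ioc a b, P.g u
      ≤ (∫ u in Set.Ioc a b, (1 - P.G u)) * (1 - P.G b) := by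
  have hL := P.haz_left hH ha hab.le hGb
  have hT := P.haz_tail_le hH (ha.trans hab.le) hGb
  have hIab : 0 ≤ ∫ u in Set.Ioc a b, (1 - P.G u) := P.int_oneSubG_nonneg _ measurableSet_Ioc
  have hTb : 0 ≤ ∫ u in Set.Ioi b, (1 - P.G u) := P.int_oneSubG_nonneg _ measurableSet_Ioi
  nlinarith [mul_le_mul_of_nonneg_left hL hTb, mul_le_mul_of_nonneg_right hT hIab]

lemma core_noninc (hH : P.HazardNoninc) (ha : 0 ≤ a) (hab : a < b) (hbc : b < c)
    (hGc : P.G c < 1) :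
    (∫ u in Set.Ioc a b, (1 - P.G u)) * ∫ u in Set.Ioc b c, P.g u
      ≤ (∫ u in Set.Ioc b c, (1 - P.G u)) * ∫ u in Set.Ioc a b, P.g u := by
  have hGb : P.G b < 1 := lt_of_le_of_lt (P.mono hbc.le) hGc
  have hL := P.haz_left' hH ha hab.le hGb
  have hR := P.haz_right' hH (ha.trans hab.le) hbc.le hGc
  have hIab : 0 ≤ ∫ u in Set.Ioc a b, (1 - P.G u) := P.int_oneSubG_nonneg _ measurableSet_Ioc
  have hIbc : 0 ≤ ∫ u in Set.Ioc b c, (1 - P.G u) := P.int_oneSubG_nonneg _ measurableSet_Ioc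
  nlinarith [mul_le_mul_of_nonneg_left hR hIab, mul_le_mul_of_nonneg_right hL hIbc]

lemma core_noninc_boundary (hH : P.HazardNoninc) (ha : 0 ≤ a) (hab : a < b)
    (hGb : P.G b < 1) :
    (∫ u in Set.Ioc a b, (1 - P.G u)) * (1 - P.G b)
      ≤ (∫ u in Set.Ioi b, (1 - P.G u)) * ∫ u in Set.Ioc a b, P.g u := by
  have hL := P.haz_left' hH ha hab.le hGb
  have hT := P.haz_tail_ge hH (ha.trans hab.le) hGb
  have hIab : 0 ≤ ∫ u in Set.Ioc a b, (1 - P.G u) := P.int_oneSubG_nonneg _ measurableSet_Ioc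
  have hTb : 0 ≤ ∫ u in Set.Ioi b, (1 - P.G u) := P.int_oneSubG_nonneg _ measurableSet_Ioi
  nlinarith [mul_le_mul_of_nonneg_right hT hIab, mul_le_mul_of_nonneg_left hL hTb]

lemma core_strictInc (hH : P.HazardStrictInc) (ha : 0 ≤ a) (hab : a < b) (hbc : b < c)
    (hGc : P.G c < 1) :
    (∫ u in Set.Ioc b c, (1 - P.G u)) * ∫ u in Set.Ioc a b, P.g u
      < (∫ u in Set.Ioc a b, (1 - P.G u)) * ∫ u in Set.Ioc b c, P.g u := by
  have hGb : P.G b < 1 := lt_of_le_of_lt (P.mono hbc.le) hGc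
  have hL := P.haz_left (P.nondec_of_strictInc hH) ha hab.le hGb
  have hR := P.haz_right_strict hH (ha.trans hab.le) hbc hGc
  have hIab : 0 < ∫ u in Set.Ioc a b, (1 - P.G u) := P.int_oneSubG_pos ha hab hGb
  have hIbc : 0 ≤ ∫ u in Set.Ioc b c, (1 - P.G u) := P.int_oneSubG_nonneg _ measurableSet_Ioc
  nlinarith [mul_le_mul_of_nonneg_left hL hIbc, mul_lt_mul_of_pos_right hR hIab]

lemma core_strictDec (hH : P.HazardStrictDec) (ha : 0 ≤ a) (hab : a < b) (hbc : b < c)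
    (hGc : P.G c < 1) :
    (∫ u in Set.Ioc a b, (1 - P.G u)) * ∫ u in Set.Ioc b c, P.g u
      < (∫ u in Set.Ioc b c, (1 - P.G u)) * ∫ u in Set.Ioc a b, P.g u := by
  have hGb : P.G b < 1 := lt_of_le_of_lt (P.mono hbc.le) hGc
  have hL := P.haz_left' (P.noninc_of_strictDec hH) ha hab.le hGb
  have hR := P.haz_right_strict' hH (ha.trans hab.le) hbc hGc
  have hIab : 0 < ∫ u in Set.Ioc a b, (1 - P.G u) := P.int_oneSubG_pos ha hab hGb
  have hIbc : 0 ≤ ∫ u in Set.Ioc b c, (1 - P.G u) := P.int_oneSubG_nonneg _ measurableSet_Ioc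
  nlinarith [mul_lt_mul_of_pos_right hR hIab, mul_le_mul_of_nonneg_left hL hIbc]

end Core

lemma qstar_eq {lam s : ℝ} (P : PatienceDist) (hlam : 0 < lam) (hs : 0 < s) (hsl : s ≤ lam) :
    qstarFun lam P s =
      lam / P.θ - lam * ∫ u in Set.Ioi (P.inv (1 - s / lam)), (1 - P.G u) := by
  obtain ⟨hx0, _⟩ := P.inv_spec' hlam hs hsl
  rw [qstarFun, if_neg hs.ne', P.Ge_eq hx0]
  have hθ : P.θ ≠ 0 := P.theta_pos.ne'
  field_simp

end PatienceDist

namespace PatienceDist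

variable (P : PatienceDist)

lemma concaveOn_qstar {lam : ℝ} (hH : P.HazardNondec) (hlam : 0 < lam) :
    ConcaveOn ℝ (Set.Icc 0 lam) (qstarFun lam P) := by
  apply concaveOn_of_slope_anti_adjacent (convex_Icc 0 lam)
  intro s1 s2 s3 hs1 hs3 h12 h23
  have hs2pos : 0 < s2 := lt_of_le_of_lt hs1.1 h12
  have hs2le : s2 ≤ lam := (h23.trans_le hs3.2).le
  have hs3pos : 0 < s3 := hs2pos.trans h23
  obtain ⟨hx2_0, hGx2⟩ := P.inv_spec' hlam hs2pos hs2le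
  obtain ⟨hx3_0, hGx3⟩ := P.inv_spec' hlam hs3pos hs3.2
  set x2 := P.inv (1 - s2 / lam) with hx2def
  set x3 := P.inv (1 - s3 / lam) with hx3def
  have hGx2lt : P.G x2 < 1 := by
    rw [hGx2]; have : 0 < s2 / lam := div_pos hs2pos hlam; linarith
  have hx32 : x3 < x2 := by
    by_contra hcon
    push_neg at hcon
    have hm := P.mono hcon
    rw [hGx2, hGx3] at hm
    have h' : s3 / lam ≤ s2 / lam := by linarith
    have := (div_le_div_iff_of_pos_right hlam).mp h'
    linarith
  have e2 := P.qstar_eq hlam hs2pos hs2le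
  have e3 := P.qstar_eq hlam hs3pos hs3.2
  rw [← hx2def] at e2
  rw [← hx3def] at e3
  have hI32 : (∫ u in Set.Ioi x3, (1 - P.G u)) - ∫ u in Set.Ioi x2, (1 - P.G u)
      = ∫ u in Set.Ioc x3 x2, (1 - P.G u) := by
    rw [P.int_oneSubG_split hx3_0 hx32.le]
  have e32 : qstarFun lam P s3 - qstarFun lam P s2
      = -(lam * ∫ u in Set.Ioc x3 x2, (1 - P.G u)) := by
    rw [e3, e2]; linear_combination (-lam) * hI32
  have hd32 : s3 - s2 = lam * ∫ u in Set.Ioc x3 x2, P.g u := by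
    rw [P.int_g_split hx3_0 hx32.le, hGx2, hGx3]; field_simp; ring
  rw [div_le_div_iff₀ (by linarith) (by linarith), e32, hd32]
  rcases eq_or_lt_of_le hs1.1 with h0 | hs1pos
  · -- boundary case s1 = 0
    have hf1 : qstarFun lam P s1 = lam / P.θ := by rw [← h0]; simp [qstarFun]
    have e21 : qstarFun lam P s2 - qstarFun lam P s1
        = -(lam * ∫ u in Set.Ioi x2, (1 - P.G u)) := by rw [e2, hf1]; ring
    have hd21 : s2 - s1 = lam * (1 - P.G x2) := by rw [← h0, hGx2]; field_simp; ring
    have core := P.core_nondec_boundary hH hx3_0 hx32 hGx2lt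
    rw [e21, hd21]
    nlinarith [mul_le_mul_of_nonneg_left core (mul_pos hlam hlam).le]
  · -- interior case
    have hs1le : s1 ≤ lam := (h12.trans_le hs2le).le
    obtain ⟨hx1_0, hGx1⟩ := P.inv_spec' hlam hs1pos hs1le
    set x1 := P.inv (1 - s1 / lam) with hx1def
    have hGx1lt : P.G x1 < 1 := by
      rw [hGx1]; have : 0 < s1 / lam := div_pos hs1pos hlam; linarith
    have hx21 : x2 < x1 := by
      by_contra hcon
      push_neg at hcon
      have hm := P.mono hcon
      rw [hGx2, hGx1] at hm
      have h' : s2 / lam ≤ s1 / lam := by linarith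
      have := (div_le_div_iff_of_pos_right hlam).mp h'
      linarith
    have e1 := P.qstar_eq hlam hs1pos hs1le
    rw [← hx1def] at e1
    have hI21 : (∫ u in Set.Ioi x2, (1 - P.G u)) - ∫ u in Set.Ioi x1, (1 - P.G u)
        = ∫ u in Set.Ioc x2 x1, (1 - P.G u) := by
      rw [P.int_oneSubG_split hx2_0 hx21.le]
    have e21 : qstarFun lam P s2 - qstarFun lam P s1
        = -(lam * ∫ u in Set.Ioc x2 x1, (1 - P.G u)) := by
      rw [e2, e1]; linear_combination (-lam) * hI21
    have hd21 : s2 - s1 = lam * ∫ u in Set.Ioc x2 x1, P.g u := by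
      rw [P.int_g_split hx2_0 hx21.le, hGx2, hGx1]; field_simp; ring
    have core := P.core_nondec hH hx3_0 hx32 hx21 hGx1lt
    rw [e21, hd21]
    nlinarith [mul_le_mul_of_nonneg_left core (mul_pos hlam hlam).le]

end PatienceDist

namespace PatienceDist

variable (P : PatienceDist)

lemma convexOn_qstar {lam : ℝ} (hH : P.HazardNoninc) (hlam : 0 < lam) :
    ConvexOn ℝ (Set.Icc 0 lam) (qstarFun lam P) := by
  apply convexOn_of_slope_mono_adjacent (convex_Icc 0 lam)
  intro s1 s2 s3 hs1 hs3 h12 h23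
  have hs2pos : 0 < s2 := lt_of_le_of_lt hs1.1 h12
  have hs2le : s2 ≤ lam := (h23.trans_le hs3.2).le
  have hs3pos : 0 < s3 := hs2pos.trans h23
  obtain ⟨hx2_0, hGx2⟩ := P.inv_spec' hlam hs2pos hs2le
  obtain ⟨hx3_0, hGx3⟩ := P.inv_spec' hlam hs3pos hs3.2
  set x2 := P.inv (1 - s2 / lam) with hx2def
  set x3 := P.inv (1 - s3 / lam) with hx3def
  have hGx2lt : P.G x2 < 1 := by
    rw [hGx2]; have : 0 < s2 / lam := div_pos hs2pos hlam; linarith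
  have hx32 : x3 < x2 := by
    by_contra hcon
    push_neg at hcon
    have hm := P.mono hcon
    rw [hGx2, hGx3] at hm
    have h' : s3 / lam ≤ s2 / lam := by linarith
    have := (div_le_div_iff_of_pos_right hlam).mp h'
    linarith
  have e2 := P.qstar_eq hlam hs2pos hs2le
  have e3 := P.qstar_eq hlam hs3pos hs3.2
  rw [← hx2def] at e2
  rw [← hx3def] at e3
  have hI32 : (∫ u in Set.Ioi x3, (1 - P.G u)) - ∫ u in Set.Ioi x2, (1 - P.G u)
      = ∫ u in Set.Ioc x3 x2, (1 - P.G u) := by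
    rw [P.int_oneSubG_split hx3_0 hx32.le]
  have e32 : qstarFun lam P s3 - qstarFun lam P s2
      = -(lam * ∫ u in Set.Ioc x3 x2, (1 - P.G u)) := by
    rw [e3, e2]; linear_combination (-lam) * hI32
  have hd32 : s3 - s2 = lam * ∫ u in Set.Ioc x3 x2, P.g u := by
    rw [P.int_g_split hx3_0 hx32.le, hGx2, hGx3]; field_simp; ring
  rw [div_le_div_iff₀ (by linarith) (by linarith), e32, hd32]
  rcases eq_or_lt_of_le hs1.1 with h0 | hs1pos
  · have hf1 : qstarFun lam P s1 = lam / P.θ := by rw [← h0]; simp [qstarFun]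
    have e21 : qstarFun lam P s2 - qstarFun lam P s1
        = -(lam * ∫ u in Set.Ioi x2, (1 - P.G u)) := by rw [e2, hf1]; ring
    have hd21 : s2 - s1 = lam * (1 - P.G x2) := by rw [← h0, hGx2]; field_simp; ring
    have core := P.core_noninc_boundary hH hx3_0 hx32 hGx2lt
    rw [e21, hd21]
    nlinarith [mul_le_mul_of_nonneg_left core (mul_pos hlam hlam).le]
  · have hs1le : s1 ≤ lam := (h12.trans_le hs2le).le
    obtain ⟨hx1_0, hGx1⟩ := P.inv_spec' hlam hs1pos hs1le
    set x1 := P.inv (1 - s1 / lam) with hx1def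
    have hGx1lt : P.G x1 < 1 := by
      rw [hGx1]; have : 0 < s1 / lam := div_pos hs1pos hlam; linarith
    have hx21 : x2 < x1 := by
      by_contra hcon
      push_neg at hcon
      have hm := P.mono hcon
      rw [hGx2, hGx1] at hm
      have h' : s2 / lam ≤ s1 / lam := by linarith
      have := (div_le_div_iff_of_pos_right hlam).mp h'
      linarith
    have e1 := P.qstar_eq hlam hs1pos hs1le
    rw [← hx1def] at e1
    have hI21 : (∫ u in Set.Ioi x2, (1 - P.G u)) - ∫ u in Set.Ioi x1, (1 - P.G u)
        = ∫ u in Set.Ioc x2 x1, (1 - P.G u) := by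
      rw [P.int_oneSubG_split hx2_0 hx21.le]
    have e21 : qstarFun lam P s2 - qstarFun lam P s1
        = -(lam * ∫ u in Set.Ioc x2 x1, (1 - P.G u)) := by
      rw [e2, e1]; linear_combination (-lam) * hI21
    have hd21 : s2 - s1 = lam * ∫ u in Set.Ioc x2 x1, P.g u := by
      rw [P.int_g_split hx2_0 hx21.le, hGx2, hGx1]; field_simp; ring
    have core := P.core_noninc hH hx3_0 hx32 hx21 hGx1lt
    rw [e21, hd21]
    nlinarith [mul_le_mul_of_nonneg_left core (mul_pos hlam hlam).le]

lemma strictConcaveOn_agg {lam : ℝ} (hH : P.HazardStrictInc) (hlam : 0 < lam) :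
    StrictConcaveOn ℝ (Set.Ioc (0:ℝ) lam)
      (fun s => (lam / P.θ) * P.Ge (P.inv (1 - s / lam))) := by
  have hF : ∀ s : ℝ, 0 < s → s ≤ lam →
      (lam / P.θ) * P.Ge (P.inv (1 - s / lam))
        = lam / P.θ - lam * ∫ u in Set.Ioi (P.inv (1 - s / lam)), (1 - P.G u) := by
    intro s hs hsl
    have h := P.qstar_eq hlam hs hsl
    rwa [qstarFun, if_neg hs.ne'] at h
  apply strictConcaveOn_of_slope_strict_anti_adjacent (convex_Ioc 0 lam)
  intro s1 s2 s3 hs1 hs3 h12 h23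
  have hs2pos : 0 < s2 := lt_of_le_of_lt hs1.1.le h12
  have hs2le : s2 ≤ lam := (h23.trans_le hs3.2).le
  obtain ⟨hx2_0, hGx2⟩ := P.inv_spec' hlam hs2pos hs2le
  obtain ⟨hx3_0, hGx3⟩ := P.inv_spec' hlam hs3.1 hs3.2
  obtain ⟨hx1_0, hGx1⟩ := P.inv_spec' hlam hs1.1 (h12.trans_le hs2le).le
  set x1 := P.inv (1 - s1 / lam) with hx1def
  set x2 := P.inv (1 - s2 / lam) with hx2def
  set x3 := P.inv (1 - s3 / lam) with hx3def
  have hGx2lt : P.G x2 < 1 := by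
    rw [hGx2]; have : 0 < s2 / lam := div_pos hs2pos hlam; linarith
  have hGx1lt : P.G x1 < 1 := by
    rw [hGx1]; have : 0 < s1 / lam := div_pos hs1.1 hlam; linarith
  have hx32 : x3 < x2 := by
    by_contra hcon
    push_neg at hcon
    have hm := P.mono hcon
    rw [hGx2, hGx3] at hm
    have h' : s3 / lam ≤ s2 / lam := by linarith
    have := (div_le_div_iff_of_pos_right hlam).mp h'
    linarith
  have hx21 : x2 < x1 := by
    by_contra hcon
    push_neg at hcon
    have hm := P.mono hcon
    rw [hGx2, hGx1] at hm
    have h' : s2 / lam ≤ s1 / lam := by linarith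
    have := (div_le_div_iff_of_pos_right hlam).mp h'
    linarith
  have e1 := hF s1 hs1.1 (h12.trans_le hs2le).le
  have e2 := hF s2 hs2pos hs2le
  have e3 := hF s3 hs3.1 hs3.2
  rw [← hx1def] at e1
  rw [← hx2def] at e2
  rw [← hx3def] at e3
  have hI32 : (∫ u in Set.Ioi x3, (1 - P.G u)) - ∫ u in Set.Ioi x2, (1 - P.G u)
      = ∫ u in Set.Ioc x3 x2, (1 - P.G u) := by
    rw [P.int_oneSubG_split hx3_0 hx32.le]
  have hI21 : (∫ u in Set.Ioi x2, (1 - P.G u)) - ∫ u in Set.Ioi x1, (1 - P.G u)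
      = ∫ u in Set.Ioc x2 x1, (1 - P.G u) := by
    rw [P.int_oneSubG_split hx2_0 hx21.le]
  have e32 : (lam / P.θ) * P.Ge (P.inv (1 - s3 / lam))
        - (lam / P.θ) * P.Ge (P.inv (1 - s2 / lam))
      = -(lam * ∫ u in Set.Ioc x3 x2, (1 - P.G u)) := by
    rw [← hx2def, ← hx3def, e3, e2]; linear_combination (-lam) * hI32
  have e21 : (lam / P.θ) * P.Ge (P.inv (1 - s2 / lam))
        - (lam / P.θ) * P.Ge (P.inv (1 - s1 / lam))
      = -(lam * ∫ u in Set.Ioc x2 x1, (1 - P.G u)) := by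
    rw [← hx1def, ← hx2def, e2, e1]; linear_combination (-lam) * hI21
  have hd32 : s3 - s2 = lam * ∫ u in Set.Ioc x3 x2, P.g u := by
    rw [P.int_g_split hx3_0 hx32.le, hGx2, hGx3]; field_simp; ring
  have hd21 : s2 - s1 = lam * ∫ u in Set.Ioc x2 x1, P.g u := by
    rw [P.int_g_split hx2_0 hx21.le, hGx2, hGx1]; field_simp; ring
  have core := P.core_strictInc hH hx3_0 hx32 hx21 hGx1lt
  show ((lam / P.θ) * P.Ge (P.inv (1 - s3 / lam))
        - (lam / P.θ) * P.Ge (P.inv (1 - s2 / lam))) / (s3 - s2)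
      < ((lam / P.θ) * P.Ge (P.inv (1 - s2 / lam))
        - (lam / P.θ) * P.Ge (P.inv (1 - s1 / lam))) / (s2 - s1)
  rw [div_lt_div_iff₀ (by linarith) (by linarith), e32, e21, hd32, hd21]
  nlinarith [mul_lt_mul_of_pos_left core (mul_pos hlam hlam)]

lemma strictConvexOn_agg {lam : ℝ} (hH : P.HazardStrictDec) (hlam : 0 < lam) :
    StrictConvexOn ℝ (Set.Ioc (0:ℝ) lam)
      (fun s => (lam / P.θ) * P.Ge (P.inv (1 - s / lam))) := by
  have hF : ∀ s : ℝ, 0 < s → s ≤ lam →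
      (lam / P.θ) * P.Ge (P.inv (1 - s / lam))
        = lam / P.θ - lam * ∫ u in Set.Ioi (P.inv (1 - s / lam)), (1 - P.G u) := by
    intro s hs hsl
    have h := P.qstar_eq hlam hs hsl
    rwa [qstarFun, if_neg hs.ne'] at h
  apply strictConvexOn_of_slope_strict_mono_adjacent (convex_Ioc 0 lam)
  intro s1 s2 s3 hs1 hs3 h12 h23
  have hs2pos : 0 < s2 := lt_of_le_of_lt hs1.1.le h12
  have hs2le : s2 ≤ lam := (h23.trans_le hs3.2).le
  obtain ⟨hx2_0, hGx2⟩ := P.inv_spec' hlam hs2pos hs2le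
  obtain ⟨hx3_0, hGx3⟩ := P.inv_spec' hlam hs3.1 hs3.2
  obtain ⟨hx1_0, hGx1⟩ := P.inv_spec' hlam hs1.1 (h12.trans_le hs2le).le
  set x1 := P.inv (1 - s1 / lam) with hx1def
  set x2 := P.inv (1 - s2 / lam) with hx2def
  set x3 := P.inv (1 - s3 / lam) with hx3def
  have hGx2lt : P.G x2 < 1 := by
    rw [hGx2]; have : 0 < s2 / lam := div_pos hs2pos hlam; linarith
  have hGx1lt : P.G x1 < 1 := by
    rw [hGx1]; have : 0 < s1 / lam := div_pos hs1.1 hlam; linarith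
  have hx32 : x3 < x2 := by
    by_contra hcon
    push_neg at hcon
    have hm := P.mono hcon
    rw [hGx2, hGx3] at hm
    have h' : s3 / lam ≤ s2 / lam := by linarith
    have := (div_le_div_iff_of_pos_right hlam).mp h'
    linarith
  have hx21 : x2 < x1 := by
    by_contra hcon
    push_neg at hcon
    have hm := P.mono hcon
    rw [hGx2, hGx1] at hm
    have h' : s2 / lam ≤ s1 / lam := by linarith
    have := (div_le_div_iff_of_pos_right hlam).mp h'
    linarith
  have e1 := hF s1 hs1.1 (h12.trans_le hs2le).le
  have e2 := hF s2 hs2pos hs2le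
  have e3 := hF s3 hs3.1 hs3.2
  rw [← hx1def] at e1
  rw [← hx2def] at e2
  rw [← hx3def] at e3
  have hI32 : (∫ u in Set.Ioi x3, (1 - P.G u)) - ∫ u in Set.Ioi x2, (1 - P.G u)
      = ∫ u in Set.Ioc x3 x2, (1 - P.G u) := by
    rw [P.int_oneSubG_split hx3_0 hx32.le]
  have hI21 : (∫ u in Set.Ioi x2, (1 - P.G u)) - ∫ u in Set.Ioi x1, (1 - P.G u)
      = ∫ u in Set.Ioc x2 x1, (1 - P.G u) := by
    rw [P.int_oneSubG_split hx2_0 hx21.le]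
  have e32 : (lam / P.θ) * P.Ge (P.inv (1 - s3 / lam))
        - (lam / P.θ) * P.Ge (P.inv (1 - s2 / lam))
      = -(lam * ∫ u in Set.Ioc x3 x2, (1 - P.G u)) := by
    rw [← hx2def, ← hx3def, e3, e2]; linear_combination (-lam) * hI32
  have e21 : (lam / P.θ) * P.Ge (P.inv (1 - s2 / lam))
        - (lam / P.θ) * P.Ge (P.inv (1 - s1 / lam))
      = -(lam * ∫ u in Set.Ioc x2 x1, (1 - P.G u)) := by
    rw [← hx1def, ← hx2def, e2, e1]; linear_combination (-lam) * hI21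
  have hd32 : s3 - s2 = lam * ∫ u in Set.Ioc x3 x2, P.g u := by
    rw [P.int_g_split hx3_0 hx32.le, hGx2, hGx3]; field_simp; ring
  have hd21 : s2 - s1 = lam * ∫ u in Set.Ioc x2 x1, P.g u := by
    rw [P.int_g_split hx2_0 hx21.le, hGx2, hGx1]; field_simp; ring
  have core := P.core_strictDec hH hx3_0 hx32 hx21 hGx1lt
  show ((lam / P.θ) * P.Ge (P.inv (1 - s2 / lam))
        - (lam / P.θ) * P.Ge (P.inv (1 - s1 / lam))) / (s2 - s1)
      < ((lam / P.θ) * P.Ge (P.inv (1 - s3 / lam))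
        - (lam / P.θ) * P.Ge (P.inv (1 - s2 / lam))) / (s3 - s2)
  rw [div_lt_div_iff₀ (by linarith) (by linarith), e32, e21, hd32, hd21]
  nlinarith [mul_lt_mul_of_pos_left core (mul_pos hlam hlam)]

end PatienceDist

/-- The linear map `m ↦ ∑ i, m (c i)`. -/
def sumAlong {β ι : Type*} [Fintype ι] (c : ι → β) : (β → ℝ) →ₗ[ℝ] ℝ where
  toFun m := ∑ i, m (c i)
  map_add' m m' := by simp [Finset.sum_add_distrib]
  map_smul' r m := by simp [Finset.mul_sum]

lemma concaveOn_comp {E : Type*} [AddCommGroup E] [Module ℝ E] {S : Set E} (hS : Convex ℝ S)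
    (L : E →ₗ[ℝ] ℝ) {c : ℝ} {f : ℝ → ℝ} (hf : ConcaveOn ℝ (Set.Icc 0 c) f)
    (hrange : ∀ m ∈ S, L m ∈ Set.Icc (0:ℝ) c) :
    ConcaveOn ℝ S (fun m => f (L m)) :=
  (hf.comp_affineMap L.toAffineMap).subset (fun m hm => hrange m hm) hS

lemma convexOn_comp {E : Type*} [AddCommGroup E] [Module ℝ E] {S : Set E} (hS : Convex ℝ S)
    (L : E →ₗ[ℝ] ℝ) {c : ℝ} {f : ℝ → ℝ} (hf : ConvexOn ℝ (Set.Icc 0 c) f)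
    (hrange : ∀ m ∈ S, L m ∈ Set.Icc (0:ℝ) c) :
    ConvexOn ℝ S (fun m => f (L m)) :=
  (hf.comp_affineMap L.toAffineMap).subset (fun m hm => hrange m hm) hS

lemma Mset_convex {J K : Type*} [Fintype J] [Fintype K] (lam : J → ℝ) (mu : K → ℝ) :
    Convex ℝ (Mset lam mu) := by
  intro m hm m' hm' a b ha hb hab
  refine ⟨fun p => ?_, fun j => ?_, fun k => ?_⟩
  · have h1 := hm.1 p; have h2 := hm'.1 p
    simp only [Pi.add_apply, Pi.smul_apply, smul_eq_mul]
    nlinarith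
  · have h1 := hm.2.1 j; have h2 := hm'.2.1 j
    have hn1 : 0 ≤ ∑ k : K, m (j, k) := Finset.sum_nonneg fun k _ => hm.1 (j, k)
    simp only [Pi.add_apply, Pi.smul_apply, smul_eq_mul]
    rw [Finset.sum_add_distrib, ← Finset.mul_sum, ← Finset.mul_sum]
    nlinarith [mul_le_mul_of_nonneg_left h1 ha, mul_le_mul_of_nonneg_left h2 hb]
  · have h1 := hm.2.2 k; have h2 := hm'.2.2 k
    have hn1 : 0 ≤ ∑ j : J, m (j, k) := Finset.sum_nonneg fun j _ => hm.1 (j, k)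
    simp only [Pi.add_apply, Pi.smul_apply, smul_eq_mul]
    rw [Finset.sum_add_distrib, ← Finset.mul_sum, ← Finset.mul_sum]
    nlinarith [mul_le_mul_of_nonneg_left h1 ha, mul_le_mul_of_nonneg_left h2 hb]

/-- Theorem 1 (concavity of the invariant queue lengths): nondecreasing hazard rates give
concave invariant queue-length functions on `𝕄(λ,μ)`, strictly increasing hazard rates give
strictly concave aggregate maps on `(0, λ_j]` (resp. `(0, μ_k]`); nonincreasing (resp. strictly
decreasing) hazard rates give the convex (resp. strictly convex) versions. -/
theorem concavity_of_invariant_queue_lengths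
    {J K : Type*} [Fintype J] [Fintype K] [Nonempty J] [Nonempty K]
    (lam : J → ℝ) (mu : K → ℝ) (hlam : ∀ j, 0 < lam j) (hmu : ∀ k, 0 < mu k)
    (GD : J → PatienceDist) (GS : K → PatienceDist) :
    (((∀ j, (GD j).HazardNondec) ∧ (∀ k, (GS k).HazardNondec)) →
      (∀ j, ConcaveOn ℝ (Mset lam mu)
        (fun m => qstarFun (lam j) (GD j) (∑ k : K, m (j, k)))) ∧
      (∀ k, ConcaveOn ℝ (Mset lam mu)
        (fun m => qstarFun (mu k) (GS k) (∑ j : J, m (j, k))))) ∧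
    (((∀ j, (GD j).HazardStrictInc) ∧ (∀ k, (GS k).HazardStrictInc)) →
      (∀ j, StrictConcaveOn ℝ (Set.Ioc (0:ℝ) (lam j))
        (fun s => (lam j / (GD j).θ) * (GD j).Ge ((GD j).inv (1 - s / lam j)))) ∧
      (∀ k, StrictConcaveOn ℝ (Set.Ioc (0:ℝ) (mu k))
        (fun s => (mu k / (GS k).θ) * (GS k).Ge ((GS k).inv (1 - s / mu k))))) ∧
    (((∀ j, (GD j).HazardNoninc) ∧ (∀ k, (GS k).HazardNoninc)) →
      (∀ j, ConvexOn ℝ (Mset lam mu)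
        (fun m => qstarFun (lam j) (GD j) (∑ k : K, m (j, k)))) ∧
      (∀ k, ConvexOn ℝ (Mset lam mu)
        (fun m => qstarFun (mu k) (GS k) (∑ j : J, m (j, k))))) ∧
    (((∀ j, (GD j).HazardStrictDec) ∧ (∀ k, (GS k).HazardStrictDec)) →
      (∀ j, StrictConvexOn ℝ (Set.Ioc (0:ℝ) (lam j))
        (fun s => (lam j / (GD j).θ) * (GD j).Ge ((GD j).inv (1 - s / lam j)))) ∧
      (∀ k, StrictConvexOn ℝ (Set.Ioc (0:ℝ) (mu k))
        (fun s => (mu k / (GS k).θ) * (GS k).Ge ((GS k).inv (1 - s / mu k))))) := by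
  refine ⟨?_, ?_, ?_, ?_⟩
  · rintro ⟨hD, hS⟩
    constructor
    · intro j
      exact concaveOn_comp (Mset_convex lam mu) (sumAlong fun k : K => (j, k))
        ((GD j).concaveOn_qstar (hD j) (hlam j))
        (fun m hm => ⟨Finset.sum_nonneg fun k _ => hm.1 (j, k), hm.2.1 j⟩)
    · intro k
      exact concaveOn_comp (Mset_convex lam mu) (sumAlong fun j : J => (j, k))
        ((GS k).concaveOn_qstar (hS k) (hmu k))
        (fun m hm => ⟨Finset.sum_nonneg fun j _ => hm.1 (j, k), hm.2.2 k⟩)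
  · rintro ⟨hD, hS⟩
    exact ⟨fun j => (GD j).strictConcaveOn_agg (hD j) (hlam j),
      fun k => (GS k).strictConcaveOn_agg (hS k) (hmu k)⟩
  · rintro ⟨hD, hS⟩
    constructor
    · intro j
      exact convexOn_comp (Mset_convex lam mu) (sumAlong fun k : K => (j, k))
        ((GD j).convexOn_qstar (hD j) (hlam j))
        (fun m hm => ⟨Finset.sum_nonneg fun k _ => hm.1 (j, k), hm.2.1 j⟩)
    · intro k
      exact convexOn_comp (Mset_convex lam mu) (sumAlong fun j : J => (j, k))
        ((GS k).convexOn_qstar (hS k) (hmu k))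
        (fun m hm => ⟨Finset.sum_nonneg fun j _ => hm.1 (j, k), hm.2.2 k⟩)
  · rintro ⟨hD, hS⟩
    exact ⟨fun j => (GD j).strictConvexOn_agg (hD j) (hlam j),
      fun k => (GS k).strictConvexOn_agg (hS k) (hmu k)⟩
end

section
/- Let m* be an extreme point of the feasible polytope 𝕄(λ,μ). Then the induced bipartite graph of m* — the simple graph on vertex set J ⊔ K in which (inl j) and (inr k) are adjacent if and only if m*_{jk} > 0, with no adjacencies within J or within K — is acyclic (it is a forest). -/
/-- The induced bipartite graph of `m`: the simple graph on `J ⊕ K` whose only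
edges join `inl j` to `inr k` when `m (j, k) > 0`. -/
def inducedGraph {J K : Type*} (m : J × K → ℝ) : SimpleGraph (J ⊕ K) where
  Adj u v :=
    (∃ j k, u = Sum.inl j ∧ v = Sum.inr k ∧ 0 < m (j, k)) ∨
    (∃ j k, u = Sum.inr k ∧ v = Sum.inl j ∧ 0 < m (j, k))
  symm := by
    refine ⟨?_⟩
    rintro u v (⟨j, k, rfl, rfl, h⟩ | ⟨j, k, rfl, rfl, h⟩)
    · exact Or.inr ⟨j, k, rfl, rfl, h⟩
    · exact Or.inl ⟨j, k, rfl, rfl, h⟩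
  loopless := by
    refine ⟨?_⟩
    rintro u (⟨j, k, h1, h2, _⟩ | ⟨j, k, h1, h2, _⟩) <;> subst h1 <;> simp at h2

private lemma list_sum_comm' {α K : Type*} [Fintype K] (L : List α) (f : K → α → ℝ) :
    ∑ k : K, (L.map (f k)).sum = (L.map (fun a => ∑ k : K, f k a)).sum := by
  induction L with
  | nil => simp
  | cons a t ih => simp [Finset.sum_add_distrib, ih]

private lemma list_sum_map_sub' {α : Type*} (L : List α) (f g : α → ℝ) :
    (L.map (fun a => f a - g a)).sum = (L.map f).sum - (L.map g).sum := by
  induction L with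
  | nil => simp
  | cons a t ih => simp [ih]; ring

private lemma list_sum_if_countP' {α : Type*} [DecidableEq α] (L : List α) (a b : α) :
    (L.map (fun q => (if q = a then (1:ℝ) else 0) - (if q = b then 1 else 0))).sum
      = (L.countP (fun q => q = a) : ℝ) - L.countP (fun q => q = b) := by
  induction L with
  | nil => simp
  | cons q t ih =>
    simp only [List.map_cons, List.sum_cons, ih, List.countP_cons]
    by_cases h1 : q = a <;> by_cases h2 : q = b <;>
      simp [h1, h2] <;> push_cast <;> ring

private lemma countP_pair_le' {α : Type*} [DecidableEq α] (L : List (α × α))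
    (a b : α × α) (hab : a ≠ b) (hs : Function.uncurry Sym2.mk a = Function.uncurry Sym2.mk b)
    (hnd : (L.map (Function.uncurry Sym2.mk)).Nodup) :
    L.countP (fun q => q = a) + L.countP (fun q => q = b) ≤ 1 := by
  induction L with
  | nil => simp
  | cons q t ih =>
    rw [List.map_cons, List.nodup_cons] at hnd
    obtain ⟨hq, hnd'⟩ := hnd
    have hzero : ∀ c : α × α, Function.uncurry Sym2.mk c = Function.uncurry Sym2.mk q →
        t.countP (fun x => x = c) = 0 := by
      intro c hc
      rw [List.countP_eq_zero]
      intro x hx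
      simp only [decide_eq_true_eq]
      rintro rfl
      exact hq (by rw [← hc]; exact List.mem_map_of_mem hx)
    simp only [List.countP_cons]
    by_cases h1 : q = a
    · have h2 : ¬ q = b := fun h => hab ((h1.symm.trans h))
      have za : t.countP (fun x => x = a) = 0 := hzero a (by rw [h1])
      have zb : t.countP (fun x => x = b) = 0 := hzero b (by rw [← hs, h1])
      simp [h1, h2, za, zb]
      exact hab
    · by_cases h2 : q = b
      · have za : t.countP (fun x => x = a) = 0 := hzero a (by rw [hs, h2])
        have zb : t.countP (fun x => x = b) = 0 := hzero b (by rw [h2])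
        simp [h1, h2, za, zb]
        exact fun h => hab h.symm
      · have := ih hnd'
        simp [h1, h2]
        omega

/-- Lemma (Property 1): the induced bipartite graph of an extreme point of `𝕄(λ,μ)`
has no cycles, i.e. it is a forest. -/
theorem inducedGraph_isAcyclic_of_extremePoint
    {J K : Type*} [Fintype J] [Fintype K] [Nonempty J] [Nonempty K]
    (lam : J → ℝ) (mu : K → ℝ) (hlam : ∀ j, 0 < lam j) (hmu : ∀ k, 0 < mu k)
    (m : J × K → ℝ) (hm : m ∈ Set.extremePoints ℝ (Mset lam mu)) :
    (inducedGraph m).IsAcyclic := by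
  classical
  intro v p hp
  set L : List ((J ⊕ K) × (J ⊕ K)) := p.darts.map (fun dd => dd.toProd) with hLdef
  have hadj : ∀ q ∈ L, (inducedGraph m).Adj q.1 q.2 := by
    intro q hq
    obtain ⟨dd, _, rfl⟩ := List.mem_map.mp hq
    exact dd.adj
  -- the counts, in ℕ
  set c1 : J × K → ℕ := fun jk =>
    L.countP (fun q => q = ((Sum.inl jk.1 : J ⊕ K), (Sum.inr jk.2 : J ⊕ K))) with hc1def
  set c2 : J × K → ℕ := fun jk =>
    L.countP (fun q => q = ((Sum.inr jk.2 : J ⊕ K), (Sum.inl jk.1 : J ⊕ K))) with hc2def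
  -- the perturbation direction
  set d : J × K → ℝ := fun jk => (c1 jk : ℝ) - c2 jk with hddef
  have hdsum : ∀ j k, d (j, k) =
      (L.map (fun q => (if q = ((Sum.inl j : J ⊕ K), (Sum.inr k : J ⊕ K)) then (1:ℝ) else 0)
        - (if q = ((Sum.inr k : J ⊕ K), (Sum.inl j : J ⊕ K)) then 1 else 0))).sum := by
    intro j k
    rw [list_sum_if_countP']
  -- basic non-degeneracy of the cycle
  have hpne : p ≠ SimpleGraph.Walk.nil := hp.ne_nil
  have hdne : p.darts ≠ [] := by
    cases p with
    | nil => exact absurd rfl hpne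
    | cons h q => simp [SimpleGraph.Walk.darts]
  have hLne : L ≠ [] := by
    rw [hLdef]; simpa using hdne
  have htne : p.support.tail ≠ [] := by
    have h := SimpleGraph.Walk.map_snd_darts p
    intro hcon
    rw [hcon] at h
    exact hdne (List.map_eq_nil_iff.mp h)
  have hsupp : p.support = v :: p.support.tail := p.support_eq_cons
  have hlast : p.support.tail.getLast htne = v := by
    rw [List.getLast_tail]
    exact p.getLast_support
  have hperm : p.support.tail.Perm p.support.dropLast := by
    conv_lhs => rw [← List.dropLast_append_getLast htne, hlast]
    have h2 : p.support.dropLast = v :: p.support.tail.dropLast := by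
      conv_lhs => rw [hsupp]
      exact List.dropLast_cons_of_ne_nil htne
    rw [h2]
    exact List.perm_append_comm.trans (by simp)
  have hfst : L.map Prod.fst = p.support.dropLast := by
    rw [hLdef, List.map_map]
    exact SimpleGraph.Walk.map_fst_darts p
  have hsnd : L.map Prod.snd = p.support.tail := by
    rw [hLdef, List.map_map]
    exact SimpleGraph.Walk.map_snd_darts p
  have hsum_eq : ∀ f : (J ⊕ K) → ℝ,
      (L.map (fun q => f q.1)).sum = (L.map (fun q => f q.2)).sum := by
    intro f
    have h1 : L.map (fun q => f q.1) = (L.map Prod.fst).map f := List.map_map.symm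
    have h2 : L.map (fun q => f q.2) = (L.map Prod.snd).map f := List.map_map.symm
    rw [h1, h2, hfst, hsnd]
    exact ((hperm.map f).sum_eq).symm
  -- row sums of d vanish
  have hrow : ∀ j, ∑ k : K, d (j, k) = 0 := by
    intro j
    have key : ∀ q ∈ L,
        (∑ k : K, ((if q = ((Sum.inl j : J ⊕ K), (Sum.inr k : J ⊕ K)) then (1:ℝ) else 0)
          - (if q = ((Sum.inr k : J ⊕ K), (Sum.inl j : J ⊕ K)) then 1 else 0)))
        = (if q.1 = (Sum.inl j : J ⊕ K) then (1:ℝ) else 0)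
          - (if q.2 = (Sum.inl j : J ⊕ K) then 1 else 0) := by
      intro q hq
      obtain ⟨q1, q2⟩ := q
      rcases hadj _ hq with ⟨j', k', h1, h2, _⟩ | ⟨j', k', h1, h2, _⟩ <;>
        simp only at h1 h2 <;> subst h1 <;> subst h2
      · by_cases hjj : j' = j <;> simp [Prod.ext_iff, hjj, Finset.sum_ite_eq]
      · by_cases hjj : j' = j <;> simp [Prod.ext_iff, hjj, Finset.sum_ite_eq]
    calc ∑ k : K, d (j, k)
        = ∑ k : K, (L.map (fun q =>
            (if q = ((Sum.inl j : J ⊕ K), (Sum.inr k : J ⊕ K)) then (1:ℝ) else 0)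
            - (if q = ((Sum.inr k : J ⊕ K), (Sum.inl j : J ⊕ K)) then 1 else 0))).sum := by
          exact Finset.sum_congr rfl fun k _ => hdsum j k
      _ = (L.map (fun q => ∑ k : K,
            ((if q = ((Sum.inl j : J ⊕ K), (Sum.inr k : J ⊕ K)) then (1:ℝ) else 0)
            - (if q = ((Sum.inr k : J ⊕ K), (Sum.inl j : J ⊕ K)) then 1 else 0)))).sum :=
          list_sum_comm' L _
      _ = (L.map (fun q => (if q.1 = (Sum.inl j : J ⊕ K) then (1:ℝ) else 0)
            - (if q.2 = (Sum.inl j : J ⊕ K) then 1 else 0))).sum :=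
          congrArg List.sum (List.map_congr_left key)
      _ = 0 := by
          rw [list_sum_map_sub' L
            (fun q => if q.1 = (Sum.inl j : J ⊕ K) then (1:ℝ) else 0)
            (fun q => if q.2 = (Sum.inl j : J ⊕ K) then (1:ℝ) else 0),
            hsum_eq (fun x => if x = (Sum.inl j : J ⊕ K) then (1:ℝ) else 0), sub_self]
  -- column sums of d vanish
  have hcol : ∀ k, ∑ j : J, d (j, k) = 0 := by
    intro k
    have key : ∀ q ∈ L,
        (∑ j : J, ((if q = ((Sum.inl j : J ⊕ K), (Sum.inr k : J ⊕ K)) then (1:ℝ) else 0)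
          - (if q = ((Sum.inr k : J ⊕ K), (Sum.inl j : J ⊕ K)) then 1 else 0)))
        = (if q.2 = (Sum.inr k : J ⊕ K) then (1:ℝ) else 0)
          - (if q.1 = (Sum.inr k : J ⊕ K) then 1 else 0) := by
      intro q hq
      obtain ⟨q1, q2⟩ := q
      rcases hadj _ hq with ⟨j', k', h1, h2, _⟩ | ⟨j', k', h1, h2, _⟩ <;>
        simp only at h1 h2 <;> subst h1 <;> subst h2
      · by_cases hkk : k' = k <;> simp [Prod.ext_iff, hkk, Finset.sum_ite_eq]
      · by_cases hkk : k' = k <;> simp [Prod.ext_iff, hkk, Finset.sum_ite_eq]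
    calc ∑ j : J, d (j, k)
        = ∑ j : J, (L.map (fun q =>
            (if q = ((Sum.inl j : J ⊕ K), (Sum.inr k : J ⊕ K)) then (1:ℝ) else 0)
            - (if q = ((Sum.inr k : J ⊕ K), (Sum.inl j : J ⊕ K)) then 1 else 0))).sum := by
          exact Finset.sum_congr rfl fun j _ => hdsum j k
      _ = (L.map (fun q => ∑ j : J,
            ((if q = ((Sum.inl j : J ⊕ K), (Sum.inr k : J ⊕ K)) then (1:ℝ) else 0)
            - (if q = ((Sum.inr k : J ⊕ K), (Sum.inl j : J ⊕ K)) then 1 else 0)))).sum :=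
          list_sum_comm' L _
      _ = (L.map (fun q => (if q.2 = (Sum.inr k : J ⊕ K) then (1:ℝ) else 0)
            - (if q.1 = (Sum.inr k : J ⊕ K) then 1 else 0))).sum :=
          congrArg List.sum (List.map_congr_left key)
      _ = 0 := by
          rw [list_sum_map_sub' L
            (fun q => if q.2 = (Sum.inr k : J ⊕ K) then (1:ℝ) else 0)
            (fun q => if q.1 = (Sum.inr k : J ⊕ K) then (1:ℝ) else 0),
            hsum_eq (fun x => if x = (Sum.inr k : J ⊕ K) then (1:ℝ) else 0), sub_self]
  -- counts are at most one (edges of a cycle are distinct)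
  have hedges : L.map (Function.uncurry Sym2.mk) = p.edges := by
    rw [hLdef, List.map_map]; rfl
  have hnd : (L.map (Function.uncurry Sym2.mk)).Nodup := by
    rw [hedges]; exact hp.isCircuit.isTrail.edges_nodup
  have hcnt : ∀ jk : J × K, c1 jk + c2 jk ≤ 1 := by
    intro jk
    exact countP_pair_le' L _ _ (by simp [Prod.ext_iff]) Sym2.eq_swap hnd
  -- d takes values in {-1, 0, 1}
  have hdvals : ∀ jk : J × K, d jk = 0 ∨ d jk = 1 ∨ d jk = -1 := by
    intro jk
    have h := hcnt jk
    rw [hddef]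
    simp only
    rcases Nat.le_one_iff_eq_zero_or_eq_one.mp (le_trans (Nat.le_add_right _ _) h) with h1 | h1
    · rcases Nat.le_one_iff_eq_zero_or_eq_one.mp (le_trans (Nat.le_add_left _ _) h) with h2 | h2
      · left; rw [h1, h2]; norm_num
      · right; right; rw [h1, h2]; norm_num
    · have h2 : c2 jk = 0 := by omega
      right; left; rw [h1, h2]; norm_num
  -- support of d lies in the support of m
  have hsupport : ∀ jk : J × K, d jk ≠ 0 → 0 < m jk := by
    rintro ⟨j, k⟩ h
    have hne : c1 (j, k) ≠ 0 ∨ c2 (j, k) ≠ 0 := by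
      by_contra hc
      push_neg at hc
      exact h (by rw [hddef]; simp only; rw [hc.1, hc.2]; norm_num)
    rcases hne with hc | hc
    · have hmem : ((Sum.inl j : J ⊕ K), (Sum.inr k : J ⊕ K)) ∈ L := by
        have := List.countP_pos_iff (p := fun q =>
            decide (q = ((Sum.inl j : J ⊕ K), (Sum.inr k : J ⊕ K)))) (l := L)
        obtain ⟨x, hx, hx2⟩ := this.mp (Nat.pos_of_ne_zero hc)
        simp only [decide_eq_true_eq] at hx2
        exact hx2 ▸ hx
      rcases hadj _ hmem with ⟨j', k', h1, h2, hpos⟩ | ⟨j', k', h1, h2, hpos⟩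
      · simp only [Sum.inl.injEq, Sum.inr.injEq] at h1 h2
        rwa [h1, h2]
      · simp at h1
    · have hmem : ((Sum.inr k : J ⊕ K), (Sum.inl j : J ⊕ K)) ∈ L := by
        have := List.countP_pos_iff (p := fun q =>
            decide (q = ((Sum.inr k : J ⊕ K), (Sum.inl j : J ⊕ K)))) (l := L)
        obtain ⟨x, hx, hx2⟩ := this.mp (Nat.pos_of_ne_zero hc)
        simp only [decide_eq_true_eq] at hx2
        exact hx2 ▸ hx
      rcases hadj _ hmem with ⟨j', k', h1, h2, hpos⟩ | ⟨j', k', h1, h2, hpos⟩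
      · simp at h1
      · simp only [Sum.inl.injEq, Sum.inr.injEq] at h1 h2
        rwa [h1, h2]
  -- d is nonzero somewhere
  have hdnonzero : ∃ jk : J × K, d jk ≠ 0 := by
    have hq0 : L.head hLne ∈ L := List.head_mem hLne
    have hcmem : ∀ (x : (J ⊕ K) × (J ⊕ K)), x ∈ L →
        0 < L.countP (fun q => q = x) := by
      intro x hx
      exact List.countP_pos_iff.mpr ⟨x, hx, by simp⟩
    rcases hadj _ hq0 with ⟨j0, k0, h1, h2, _⟩ | ⟨j0, k0, h1, h2, _⟩
    · refine ⟨(j0, k0), ?_⟩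
      have hmem : ((Sum.inl j0 : J ⊕ K), (Sum.inr k0 : J ⊕ K)) ∈ L := by
        have he : L.head hLne = ((Sum.inl j0 : J ⊕ K), (Sum.inr k0 : J ⊕ K)) := by
          rw [← h1, ← h2]
        rw [← he]; exact hq0
      have hpos : 0 < c1 (j0, k0) := hcmem _ hmem
      have hcc := hcnt (j0, k0)
      have e1 : c1 (j0, k0) = 1 := by omega
      have e2 : c2 (j0, k0) = 0 := by omega
      show (c1 (j0, k0) : ℝ) - c2 (j0, k0) ≠ 0
      rw [e1, e2]; norm_num
    · refine ⟨(j0, k0), ?_⟩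
      have hmem : ((Sum.inr k0 : J ⊕ K), (Sum.inl j0 : J ⊕ K)) ∈ L := by
        have he : L.head hLne = ((Sum.inr k0 : J ⊕ K), (Sum.inl j0 : J ⊕ K)) := by
          rw [← h1, ← h2]
        rw [← he]; exact hq0
      have hpos : 0 < c2 (j0, k0) := hcmem _ hmem
      have hcc := hcnt (j0, k0)
      have e2 : c2 (j0, k0) = 1 := by omega
      have e1 : c1 (j0, k0) = 0 := by omega
      show (c1 (j0, k0) : ℝ) - c2 (j0, k0) ≠ 0
      rw [e1, e2]; norm_num
  obtain ⟨jk0, hjk0⟩ := hdnonzero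
  -- choose ε
  set S : Finset (J × K) := Finset.univ.filter (fun q => d q ≠ 0) with hSdef
  have hS : S.Nonempty := ⟨jk0, by simp [hSdef, hjk0]⟩
  set ε : ℝ := S.inf' hS m with hεdef
  obtain ⟨hmem, hext⟩ := hm
  obtain ⟨hm0, hmrow, hmcol⟩ := hmem
  have hεpos : 0 < ε := by
    rw [hεdef, Finset.lt_inf'_iff]
    intro q hq
    exact hsupport q (by simpa [hSdef] using hq)
  have hεle : ∀ q : J × K, d q ≠ 0 → ε ≤ m q := by
    intro q hq
    exact Finset.inf'_le m (by simp [hSdef, hq])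
  -- the two perturbed points
  set m₁ : J × K → ℝ := fun q => m q + ε * d q with hm₁def
  set m₂ : J × K → ℝ := fun q => m q - ε * d q with hm₂def
  have habs : ∀ q : J × K, |ε * d q| ≤ m q := by
    intro q
    rcases hdvals q with h | h | h
    · rw [h]; simp; exact hm0 q
    · rw [h, mul_one, abs_of_pos hεpos]
      exact hεle q (by rw [h]; norm_num)
    · rw [h]
      rw [show ε * (-1 : ℝ) = -ε by ring, abs_neg, abs_of_pos hεpos]
      exact hεle q (by rw [h]; norm_num)
  have hmem₁ : m₁ ∈ Mset lam mu := by
    refine ⟨fun q => ?_, fun j => ?_, fun k => ?_⟩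
    · have := (abs_le.mp (habs q)).1
      simp only [hm₁def]; linarith
    · have he : ∑ k : K, m₁ (j, k) = (∑ k : K, m (j, k)) + ε * ∑ k : K, d (j, k) := by
        simp only [hm₁def]
        rw [Finset.sum_add_distrib, Finset.mul_sum]
      rw [he, hrow j]
      simpa using hmrow j
    · have he : ∑ j : J, m₁ (j, k) = (∑ j : J, m (j, k)) + ε * ∑ j : J, d (j, k) := by
        simp only [hm₁def]
        rw [Finset.sum_add_distrib, Finset.mul_sum]
      rw [he, hcol k]
      simpa using hmcol k
  have hmem₂ : m₂ ∈ Mset lam mu := by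
    refine ⟨fun q => ?_, fun j => ?_, fun k => ?_⟩
    · have := (abs_le.mp (habs q)).2
      simp only [hm₂def]; linarith
    · have he : ∑ k : K, m₂ (j, k) = (∑ k : K, m (j, k)) - ε * ∑ k : K, d (j, k) := by
        simp only [hm₂def]
        rw [Finset.sum_sub_distrib, Finset.mul_sum]
      rw [he, hrow j]
      simpa using hmrow j
    · have he : ∑ j : J, m₂ (j, k) = (∑ j : J, m (j, k)) - ε * ∑ j : J, d (j, k) := by
        simp only [hm₂def]
        rw [Finset.sum_sub_distrib, Finset.mul_sum]
      rw [he, hcol k]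
      simpa using hmcol k
  have hseg : m ∈ openSegment ℝ m₁ m₂ := by
    refine ⟨1/2, 1/2, by norm_num, by norm_num, by norm_num, ?_⟩
    funext q
    simp only [Pi.add_apply, Pi.smul_apply, smul_eq_mul, hm₁def, hm₂def]
    ring
  have h12 := hext hmem₁ hmem₂ hseg
  have hfun : m₁ jk0 = m jk0 := congrFun h12 jk0
  rw [hm₁def] at hfun
  simp only at hfun
  have hz : ε * d jk0 = 0 := by linarith
  rcases mul_eq_zero.mp hz with h | h
  · exact absurd h (ne_of_gt hεpos)
  · exact hjk0 h
end

section
/- The constraint matrix of the bipartite matching linear program is totally unimodular: the matrix A with rows indexed by J ⊕ K and columns indexed by J × K, defined by A(inl j', (j,k)) = 1 if j = j' and 0 otherwise, and A(inr k', (j,k)) = 1 if k = k' and 0 otherwise, is totally unimodular (every square submatrix has determinant −1, 0, or 1). -/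
/-- The constraint matrix of the bipartite matching linear program: rows indexed by
`J ⊕ K`, columns by `J × K`, with `A (inl j') (j,k) = 1` iff `j = j'` and
`A (inr k') (j,k) = 1` iff `k = k'` (and `0` otherwise). -/
def constraintMatrix (J K : Type*) [DecidableEq J] [DecidableEq K] :
    Matrix (J ⊕ K) (J × K) ℚ :=
  fun r p =>
    match r with
    | Sum.inl j' => if p.1 = j' then 1 else 0
    | Sum.inr k' => if p.2 = k' then 1 else 0

lemma cm_apply_ne {J K : Type*} [DecidableEq J] [DecidableEq K]
    (r : J ⊕ K) (p : J × K) (h : constraintMatrix J K r p ≠ 0) :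
    constraintMatrix J K r p = 1 ∧ (r = Sum.inl p.1 ∨ r = Sum.inr p.2) := by
  cases r with
  | inl j' =>
    by_cases hj : p.1 = j' <;> simp_all [constraintMatrix]
  | inr k' =>
    by_cases hk : p.2 = k' <;> simp_all [constraintMatrix]


/-- Lemma: the constraint matrix of the bipartite matching linear program is totally
unimodular (every square submatrix has determinant `-1`, `0`, or `1`). -/
theorem constraintMatrix_isTotallyUnimodular
    (J K : Type*) [Fintype J] [Fintype K] [Nonempty J] [Nonempty K]
    [DecidableEq J] [DecidableEq K] :
    (constraintMatrix J K).IsTotallyUnimodular := by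
  intro k
  induction k with
  | zero => exact fun f g _ _ => ⟨1, by simp⟩
  | succ k ih =>
    intro f g hf hg
    set M := (constraintMatrix J K).submatrix f g with hM
    by_cases hcase : ∀ x : Fin (k+1),
        (∃ i, f i = Sum.inl (g x).1) ∧ (∃ i, f i = Sum.inr (g x).2)
    · -- rows are dependent: det = 0
      refine ⟨0, ?_⟩
      rw [SignType.coe_zero, eq_comm, ← Matrix.exists_vecMul_eq_zero_iff]
      refine ⟨fun i => if (f i).isLeft then 1 else -1, ?_, ?_⟩
      · intro hv
        have h0 := congrFun hv 0
        by_cases h : (f 0).isLeft <;> simp [h] at h0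
      · funext x
        obtain ⟨⟨i₁, hi₁⟩, ⟨i₂, hi₂⟩⟩ := hcase x
        have hne : i₁ ≠ i₂ := by
          intro h; rw [h, hi₂] at hi₁; cases hi₁
        have key : ∀ i : Fin (k+1),
            (if (f i).isLeft then (1:ℚ) else -1) * M i x
              = (if i = i₁ then 1 else 0) + (if i = i₂ then -1 else 0) := by
          intro i
          by_cases h1 : i = i₁
          · subst h1
            simp [hne, hM, Matrix.submatrix_apply, hi₁, constraintMatrix]
          · by_cases h2 : i = i₂
            · subst h2
              simp [h1, hM, Matrix.submatrix_apply, hi₂, constraintMatrix]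
            · simp only [h1, h2, if_false, add_zero]
              by_cases hz : M i x = 0
              · rw [hz, mul_zero]
              · obtain ⟨-, hc⟩ := cm_apply_ne (f i) (g x) hz
                rcases hc with hc | hc
                · exact absurd (hf (hc.trans hi₁.symm)) h1
                · exact absurd (hf (hc.trans hi₂.symm)) h2
        simp only [Matrix.vecMul, dotProduct, Pi.zero_apply]
        rw [Finset.sum_congr rfl (fun i _ => key i)]
        simp [Finset.sum_add_distrib, hne]
    · -- some column has at most one nonzero entry
      push_neg at hcase
      obtain ⟨x, hx⟩ := hcase
      have hcol : ∃ a : J ⊕ K, ∀ i, M i x ≠ 0 → f i = a := by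
        rcases Classical.em (∃ i, f i = Sum.inl (g x).1) with h | h
        · refine ⟨Sum.inl (g x).1, fun i hi => ?_⟩
          obtain ⟨-, hc⟩ := cm_apply_ne (f i) (g x) hi
          rcases hc with hc | hc
          · exact hc
          · exact absurd hc (hx h i)
        · refine ⟨Sum.inr (g x).2, fun i hi => ?_⟩
          obtain ⟨-, hc⟩ := cm_apply_ne (f i) (g x) hi
          rcases hc with hc | hc
          · exact absurd ⟨i, hc⟩ h
          · exact hc
      obtain ⟨a, ha⟩ := hcol
      by_cases hex : ∃ i₀, M i₀ x ≠ 0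
      · obtain ⟨i₀, hi₀⟩ := hex
        obtain ⟨h1, -⟩ := cm_apply_ne (f i₀) (g x) hi₀
        have hzero : ∀ i ∈ Finset.univ, i ≠ i₀ →
            (-1 : ℚ) ^ (i + x : ℕ) * M i x * (M.submatrix i.succAbove x.succAbove).det = 0 := by
          intro i _ hi
          by_cases hz : M i x = 0
          · rw [hz]; ring
          · exact absurd (hf ((ha i hz).trans (ha i₀ hi₀).symm)) hi
        have hdet := Matrix.det_succ_column M x
        rw [Finset.sum_eq_single i₀ hzero (by simp)] at hdet
        rw [hM, Matrix.submatrix_submatrix] at hdet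
        obtain ⟨s, hs⟩ := ih (f ∘ i₀.succAbove) (g ∘ x.succAbove)
          (hf.comp (Fin.succAbove_right_injective))
          (hg.comp (Fin.succAbove_right_injective))
        rcases Nat.even_or_odd ((i₀ : ℕ) + (x : ℕ)) with he | ho
        · exact ⟨s, by rw [hdet, Matrix.submatrix_apply, h1, he.neg_one_pow, ← hs]; ring⟩
        · refine ⟨-s, ?_⟩
          rw [hdet, Matrix.submatrix_apply, h1, ho.neg_one_pow, ← hs]
          simp
      · push_neg at hex
        exact ⟨0, by rw [SignType.coe_zero]; exact (Matrix.det_eq_zero_of_column_eq_zero x hex).symm⟩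
end

section
/- Let q : J → ℤ and i : K → ℤ have nonnegative entries, and let P = {y : J × K → ℝ : y_{jk} ≥ 0 for all (j,k); Σ_{k∈K} y_{jk} ≤ q_j for all j ∈ J; Σ_{j∈J} y_{jk} ≤ i_k for all k ∈ K}. Then every extreme point of P has all integer coordinates. Consequently, for any objective weights v_{jk}, the integer program maximizing Σ_{j,k} v_{jk} y_{jk} over the integer points of P has the same optimal value as its linear programming relaxation over P. -/
open Finset Sum
open scoped Classical

section Graph
variable {J K : Type*} [Fintype J] [Fintype K]

variable (F : Set (J × K))

/-- the bipartite graph of fractional entries -/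
def fracGraph : SimpleGraph (J ⊕ K) where
  Adj a b := match a, b with
    | .inl j, .inr k => (j, k) ∈ F
    | .inr k, .inl j => (j, k) ∈ F
    | _, _ => False
  symm := ⟨by rintro (j|k) (j'|k') h <;> simp_all⟩
  loopless := ⟨by rintro (j|k) h <;> simp_all⟩

@[simp] lemma fracGraph_adj_lr (j : J) (k : K) :
    (fracGraph F).Adj (inl j) (inr k) ↔ (j, k) ∈ F := Iff.rfl
@[simp] lemma fracGraph_adj_rl (j : J) (k : K) :
    (fracGraph F).Adj (inr k) (inl j) ↔ (j, k) ∈ F := Iff.rfl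
@[simp] lemma fracGraph_adj_ll (j j' : J) :
    ¬ (fracGraph F).Adj (inl j) (inl j') := fun h => h
@[simp] lemma fracGraph_adj_rr (k k' : K) :
    ¬ (fracGraph F).Adj (inr k) (inr k') := fun h => h

variable {F}

/-- contribution of one directed edge -/
noncomputable def sgn (a b : J ⊕ K) : J × K → ℝ := match a, b with
  | .inl j, .inr k => Pi.single (j, k) 1
  | .inr k, .inl j => - Pi.single (j, k) 1
  | _, _ => 0

/-- signed indicator of a walk -/
noncomputable def eps : ∀ {a b : J ⊕ K}, (fracGraph F).Walk a b → (J × K → ℝ)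
  | _, _, .nil => 0
  | a, _, .cons (v := c) _ p => sgn a c + eps p

@[simp] lemma eps_nil {a : J ⊕ K} : eps (F := F) (.nil : (fracGraph F).Walk a a) = 0 := rfl
@[simp] lemma eps_cons {a c b : J ⊕ K} (h : (fracGraph F).Adj a c) (p : (fracGraph F).Walk c b) :
    eps (.cons h p) = sgn a c + eps p := rfl

lemma eps_eq_zero_of_not_mem_edges {a b : J ⊕ K} (w : (fracGraph F).Walk a b) (j : J) (k : K)
    (h : s(inl j, inr k) ∉ w.edges) : eps w (j, k) = 0 := by
  induction w with
  | nil => simp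
  | @cons a c b hadj p ih =>
    rw [SimpleGraph.Walk.edges_cons, List.mem_cons] at h
    push_neg at h
    rw [eps_cons, Pi.add_apply, ih h.2, add_zero]
    match a, c, hadj with
    | .inl j', .inr k', hadj =>
      have : (j', k') ≠ (j, k) := by
        intro he; rw [Prod.mk.injEq] at he; obtain ⟨rfl, rfl⟩ := he; exact h.1 rfl
      simp [sgn, Pi.single_apply, Ne.symm (fun hh => this hh.symm), this]
    | .inr k', .inl j', hadj =>
      have : (j', k') ≠ (j, k) := by
        intro he; rw [Prod.mk.injEq] at he; obtain ⟨rfl, rfl⟩ := he; exact h.1 (Sym2.eq_swap)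
      simp [sgn, Pi.single_apply, Ne.symm (fun hh => this hh.symm), this]

lemma eps_support {a b : J ⊕ K} (w : (fracGraph F).Walk a b) (j : J) (k : K)
    (h : eps w (j, k) ≠ 0) : (j, k) ∈ F := by
  by_contra hF
  apply h
  apply eps_eq_zero_of_not_mem_edges
  intro hmem
  exact hF (w.edges_subset_edgeSet hmem)

/-- divergence of a vector field at a vertex -/
noncomputable def divg (f : J × K → ℝ) : J ⊕ K → ℝ
  | .inl j => ∑ k, f (j, k)
  | .inr k => - ∑ j, f (j, k)

lemma divg_add (f g : J × K → ℝ) (v : J ⊕ K) : divg (f + g) v = divg f v + divg g v := by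
  cases v <;> simp [divg, Finset.sum_add_distrib] <;> ring

lemma sum_single_row (j : J) (k : K) (j' : J) :
    ∑ k' : K, (Pi.single ((j, k) : J × K) (1 : ℝ) : J × K → ℝ) (j', k') = if j = j' then (1:ℝ) else 0 := by
  rcases eq_or_ne j j' with rfl | hj
  · rw [if_pos rfl, Finset.sum_eq_single k]
    · simp
    · intro k' _ hk'; exact Pi.single_eq_of_ne (by simp [hk']) 1
    · simp
  · rw [if_neg hj]
    exact Finset.sum_eq_zero fun k' _ => Pi.single_eq_of_ne (by simp [Ne.symm hj]) 1

lemma sum_single_col (j : J) (k : K) (k' : K) :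
    ∑ j' : J, (Pi.single ((j, k) : J × K) (1 : ℝ) : J × K → ℝ) (j', k') = if k = k' then (1:ℝ) else 0 := by
  rcases eq_or_ne k k' with rfl | hk
  · rw [if_pos rfl, Finset.sum_eq_single j]
    · simp
    · intro j' _ hj'; exact Pi.single_eq_of_ne (by simp [hj']) 1
    · simp
  · rw [if_neg hk]
    exact Finset.sum_eq_zero fun j' _ => Pi.single_eq_of_ne (by simp [Ne.symm hk]) 1

lemma divg_sgn {a b : J ⊕ K} (hadj : (fracGraph F).Adj a b) (v : J ⊕ K) :
    divg (sgn a b : J × K → ℝ) v = (if a = v then 1 else 0) - (if b = v then 1 else 0) := by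
  match a, b, hadj with
  | .inl j, .inr k, _ =>
    cases v with
    | inl j' =>
      simp only [divg, sgn, sum_single_row]
      by_cases hj : j = j' <;> simp [hj]
    | inr k' =>
      simp only [divg, sgn, sum_single_col]
      by_cases hk : k = k' <;> simp [hk]
  | .inr k, .inl j, _ =>
    cases v with
    | inl j' =>
      simp only [divg, sgn, Pi.neg_apply, Finset.sum_neg, sum_single_row]
      by_cases hj : j = j' <;> simp [hj, sum_single_row]
    | inr k' =>
      simp only [divg, sgn, Pi.neg_apply, Finset.sum_neg, sum_single_col]
      by_cases hk : k = k' <;> simp [hk, sum_single_col]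

section Key


lemma divg_eps {F : Set (J × K)} {a b : J ⊕ K} (w : (fracGraph F).Walk a b) (v : J ⊕ K) :
    divg (eps w) v = (if a = v then 1 else 0) - (if b = v then 1 else 0) := by
  induction w with
  | nil => cases v <;> simp [divg, eps]
  | @cons a c b hadj p ih => rw [eps_cons, divg_add, divg_sgn hadj, ih]; ring

lemma eps_cons_ne_zero {F : Set (J × K)} {a c b : J ⊕ K} (h : (fracGraph F).Adj a c)
    (p : (fracGraph F).Walk c b) (hd : (SimpleGraph.Walk.cons h p).edges.Nodup) :
    eps (.cons h p) ≠ 0 := by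
  rw [SimpleGraph.Walk.edges_cons, List.nodup_cons] at hd
  match a, c, h with
  | .inl j, .inr k, h =>
    intro h0
    have h2 := congrFun h0 (j, k)
    rw [eps_cons, Pi.add_apply, eps_eq_zero_of_not_mem_edges p j k hd.1, add_zero] at h2
    simp [sgn] at h2
  | .inr k, .inl j, h =>
    intro h0
    have h2 := congrFun h0 (j, k)
    have hd1 : s(inl j, inr k) ∉ p.edges := by rw [Sym2.eq_swap]; exact hd.1
    rw [eps_cons, Pi.add_apply, eps_eq_zero_of_not_mem_edges p j k hd1, add_zero] at h2
    simp [sgn] at h2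

/-- From a non-`B` endpoint of a maximal path, produce a cycle perturbation. -/
lemma helper_cycle {F : Set (J × K)} {a b : J ⊕ K} (p : (fracGraph F).Walk a b)
    (hp : p.IsPath) (hlen : 1 ≤ p.length)
    (hmax : ¬ ∃ (a' b' : J ⊕ K) (p' : (fracGraph F).Walk a' b'),
      p'.IsPath ∧ p'.length = p.length + 1)
    (hdeg : ∀ w, (fracGraph F).Adj a w → ∃ w' ≠ w, (fracGraph F).Adj a w') :
    ∃ ε : J × K → ℝ, ε ≠ 0 ∧ (∀ pr, ε pr ≠ 0 → pr ∈ F) ∧ (∀ v, divg ε v = 0) := by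
  cases p with
  | nil => simp at hlen
  | @cons _ w0 _ h q =>
    obtain ⟨hq, ha⟩ := (SimpleGraph.Walk.cons_isPath_iff _ _).mp hp
    obtain ⟨w, hw_ne, hadjw⟩ := hdeg w0 h
    rcases Classical.em (w ∈ q.support) with hws | hws
    · -- cycle case
      set t := q.takeUntil w hws with ht
      have htp : t.IsPath := hq.takeUntil hws
      have hts : t.support ⊆ q.support := fun x hx => q.support_takeUntil_subset hws hx
      have hanott : a ∉ t.support := fun hx => ha (hts hx)
      have hwa : s(w, a) ∉ t.edges := fun hx =>
        hanott (t.snd_mem_support_of_mem_edges hx)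
      have haw0 : s(a, w0) ∉ t.edges := fun hx =>
        hanott (t.fst_mem_support_of_mem_edges hx)
      refine ⟨eps (.cons h (t.concat hadjw.symm)), ?_, ?_, ?_⟩
      · apply eps_cons_ne_zero
        rw [SimpleGraph.Walk.edges_cons, SimpleGraph.Walk.edges_concat, List.concat_eq_append, List.nodup_cons]
        constructor
        · rw [List.mem_append]
          rintro (hx | hx)
          · exact haw0 hx
          · rw [List.mem_singleton] at hx
            rw [Sym2.eq_iff] at hx
            rcases hx with ⟨rfl, -⟩ | ⟨-, rfl⟩
            · exact (fracGraph F).ne_of_adj hadjw rfl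
            · exact hw_ne rfl
        · rw [List.nodup_append]
          exact ⟨htp.isTrail.edges_nodup, List.nodup_singleton _,
            by simpa using (fun x hx hxe => hwa (hxe ▸ hx) : ∀ x ∈ t.edges, x = s(w, a) → False)⟩
      · intro pr hpr
        rcases pr with ⟨j, k⟩
        exact eps_support _ j k hpr
      · intro v; rw [divg_eps]; ring
    · -- extension case: contradiction
      exfalso
      apply hmax
      have hwp : w ∉ (SimpleGraph.Walk.cons h q).support := by
        rw [SimpleGraph.Walk.support_cons, List.mem_cons]
        rintro (rfl | hx)
        · exact (fracGraph F).ne_of_adj hadjw rfl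
        · exact hws hx
      exact ⟨w, b, .cons hadjw.symm (.cons h q),
        (SimpleGraph.Walk.cons_isPath_iff _ _).mpr ⟨hp, hwp⟩, by simp⟩

/-- Key combinatorial lemma: existence of a perturbation direction. -/
lemma key {F : Set (J × K)} (B : J ⊕ K → Prop) (hF : F.Nonempty)
    (hdeg : ∀ v, ¬ B v → ∀ w, (fracGraph F).Adj v w → ∃ w' ≠ w, (fracGraph F).Adj v w') :
    ∃ ε : J × K → ℝ, ε ≠ 0 ∧ (∀ p, ε p ≠ 0 → p ∈ F) ∧ (∀ v, ¬ B v → divg ε v = 0) := by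
  obtain ⟨⟨j0, k0⟩, hjk0⟩ := hF
  set G := fracGraph F
  set N := Fintype.card (J ⊕ K) with hN
  have hadj0 : G.Adj (inl j0) (inr k0) := hjk0
  set P : ℕ → Prop := fun n => ∃ (a b : J ⊕ K) (p : G.Walk a b), p.IsPath ∧ p.length = n with hP
  have hP1 : P 1 := ⟨inl j0, inr k0, .cons hadj0 .nil, by
    rw [SimpleGraph.Walk.cons_isPath_iff]
    exact ⟨SimpleGraph.Walk.IsPath.nil, by simp⟩, by simp⟩
  have : Nonempty (J ⊕ K) := ⟨inl j0⟩
  have hN1 : 1 ≤ N := Fintype.card_pos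
  set L := Nat.findGreatest P N with hL
  have hPL : P L := Nat.findGreatest_spec hN1 hP1
  have hL1 : 1 ≤ L := Nat.le_findGreatest hN1 hP1
  obtain ⟨a, b, p, hp, hplen⟩ := hPL
  have hmax : ¬ ∃ (a' b' : J ⊕ K) (p' : G.Walk a' b'), p'.IsPath ∧ p'.length = p.length + 1 := by
    rintro ⟨a', b', p', hp', hlen'⟩
    have hlt : p'.length < N := hp'.length_lt
    have hgr := Nat.findGreatest_is_greatest (P := P) (n := N) (k := p.length + 1)
      (by omega) (by omega)
    exact hgr ⟨a', b', p', hp', hlen'⟩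
  by_cases hBa : B a
  · by_cases hBb : B b
    · -- both endpoints bad: use the path itself
      have hab : a ≠ b := by
        rintro rfl
        rw [SimpleGraph.Walk.isPath_iff_eq_nil] at hp
        subst hp
        simp at hplen
        omega
      refine ⟨eps p, ?_, ?_, ?_⟩
      · intro h0
        have hd := divg_eps p a
        rw [h0, if_pos rfl, if_neg (fun h : b = a => hab h.symm)] at hd
        cases a with
        | inl j => norm_num [divg] at hd
        | inr k => norm_num [divg] at hd
      · intro pr hpr; rcases pr with ⟨j, k⟩; exact eps_support _ j k hpr
      · intro v hv
        rw [divg_eps]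
        rw [if_neg (fun h : a = v => hv (h ▸ hBa)), if_neg (fun h : b = v => hv (h ▸ hBb))]
        ring
    · -- endpoint b not bad: use reversed path
      have := helper_cycle p.reverse hp.reverse (by rw [SimpleGraph.Walk.length_reverse]; omega)
        (by rw [SimpleGraph.Walk.length_reverse]; exact hmax)
        (hdeg b hBb)
      obtain ⟨ε, h1, h2, h3⟩ := this
      exact ⟨ε, h1, h2, fun v _ => h3 v⟩
  · have := helper_cycle p hp (by omega) hmax (hdeg a hBa)
    obtain ⟨ε, h1, h2, h3⟩ := this
    exact ⟨ε, h1, h2, fun v _ => h3 v⟩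

end Key
end Graph

/-- The polytope `P = {y ≥ 0 : Σ_k y_{jk} ≤ q_j, Σ_j y_{jk} ≤ i_k}` with integer
right-hand sides. -/
def Pset {J K : Type*} [Fintype J] [Fintype K] (q : J → ℤ) (i : K → ℤ) :
    Set (J × K → ℝ) :=
  {y | (∀ p, 0 ≤ y p) ∧ (∀ j, ∑ k : K, y (j, k) ≤ (q j : ℝ)) ∧
    (∀ k, ∑ j : J, y (j, k) ≤ (i k : ℝ))}

section Main
variable {J K : Type*} [Fintype J] [Fintype K]

lemma isInt_sum {α : Type*} (s : Finset α) (f : α → ℝ) (h : ∀ x ∈ s, ∃ z : ℤ, f x = z) :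
    ∃ z : ℤ, ∑ x ∈ s, f x = z := by
  classical
  induction s using Finset.induction with
  | empty => exact ⟨0, by simp⟩
  | insert _ _ hx ih =>
    obtain ⟨z1, hz1⟩ := h _ (Finset.mem_insert_self _ _)
    obtain ⟨z2, hz2⟩ := ih fun x hxs => h x (Finset.mem_insert_of_mem hxs)
    exact ⟨z1 + z2, by rw [Finset.sum_insert hx, hz1, hz2, Int.cast_add]⟩

lemma extreme_integral (q : J → ℤ) (i : K → ℤ)
    (y : J × K → ℝ) (hy : y ∈ Set.extremePoints ℝ (Pset q i)) :
    ∀ p : J × K, ∃ z : ℤ, y p = (z : ℝ) := by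
  by_contra hcon
  push_neg at hcon
  obtain ⟨p0, hp0⟩ := hcon
  obtain ⟨hy0, hyq, hyi⟩ := hy.1
  set F : Set (J × K) := {p | ¬ ∃ z : ℤ, y p = (z : ℝ)} with hF
  have hFne : F.Nonempty := ⟨p0, fun ⟨z, hz⟩ => hp0 z hz⟩
  set B : J ⊕ K → Prop := fun v => match v with
    | .inl j => ¬ ∃ z : ℤ, ∑ k : K, y (j, k) = (z : ℝ)
    | .inr k => ¬ ∃ z : ℤ, ∑ j : J, y (j, k) = (z : ℝ) with hB
  have hdeg : ∀ v, ¬ B v → ∀ w, (fracGraph F).Adj v w → ∃ w' ≠ w, (fracGraph F).Adj v w' := by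
    rintro (j | k) hBv (j' | k') hadj
    · exact absurd hadj (fracGraph_adj_ll F _ _)
    · -- row j, edge to column k'
      by_contra hno
      push_neg at hno
      have hint : ∀ k'' ≠ k', ∃ z : ℤ, y (j, k'') = (z : ℝ) := by
        intro k'' hk''
        have := hno (inr k'') (by simpa using hk'')
        rw [fracGraph_adj_lr] at this
        simpa [hF] using this
      rw [hB, not_not] at hBv
      obtain ⟨z, hz⟩ := hBv
      have herase : ∃ z : ℤ, ∑ k'' ∈ Finset.univ.erase k', y (j, k'') = (z : ℝ) := by
        apply isInt_sum
        intro k'' hk''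
        exact hint k'' (Finset.ne_of_mem_erase hk'')
      obtain ⟨z2, hz2⟩ := herase
      apply hadj  -- hadj : (j,k') ∈ F, i.e. y (j,k') not an integer
      refine ⟨z - z2, ?_⟩
      have := Finset.sum_erase_add Finset.univ (fun k'' => y (j, k'')) (Finset.mem_univ k')
      push_cast
      rw [← hz, ← hz2, ← this]
      ring
    · -- column k, edge to row j'
      by_contra hno
      push_neg at hno
      have hint : ∀ j'' ≠ j', ∃ z : ℤ, y (j'', k) = (z : ℝ) := by
        intro j'' hj''
        have := hno (inl j'') (by simpa using hj'')
        rw [fracGraph_adj_rl] at this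
        simpa [hF] using this
      rw [hB, not_not] at hBv
      obtain ⟨z, hz⟩ := hBv
      have herase : ∃ z : ℤ, ∑ j'' ∈ Finset.univ.erase j', y (j'', k) = (z : ℝ) := by
        apply isInt_sum
        intro j'' hj''
        exact hint j'' (Finset.ne_of_mem_erase hj'')
      obtain ⟨z2, hz2⟩ := herase
      apply hadj
      refine ⟨z - z2, ?_⟩
      have := Finset.sum_erase_add Finset.univ (fun j'' => y (j'', k)) (Finset.mem_univ j')
      push_cast
      rw [← hz, ← hz2, ← this]
      ring
    · exact absurd hadj (fracGraph_adj_rr F _ _)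
  obtain ⟨ε, hεne, hεsupp, hεdiv⟩ := key B hFne hdeg
  -- positivity facts
  have hεpos : ∀ p, ε p ≠ 0 → 0 < y p := by
    intro p hp
    rcases lt_or_eq_of_le (hy0 p) with h | h
    · exact h
    · exact absurd ⟨0, by rw [← h]; simp⟩ (hεsupp p hp)
  have hrow : ∀ j, (∑ k : K, ε (j, k) = 0) ∨ (∑ k : K, y (j, k) < (q j : ℝ)) := by
    intro j
    by_cases hBj : B (inl j)
    · right
      rcases lt_or_eq_of_le (hyq j) with h | h
      · exact h
      · rw [hB] at hBj; exact absurd ⟨q j, h⟩ hBj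
    · left; exact hεdiv (inl j) hBj
  have hcol : ∀ k, (∑ j : J, ε (j, k) = 0) ∨ (∑ j : J, y (j, k) < (i k : ℝ)) := by
    intro k
    by_cases hBk : B (inr k)
    · right
      rcases lt_or_eq_of_le (hyi k) with h | h
      · exact h
      · rw [hB] at hBk; exact absurd ⟨i k, h⟩ hBk
    · left
      have := hεdiv (inr k) hBk
      simpa [divg, neg_eq_zero] using this
  -- choose a step size t > 0
  set A1 : ℝ := Finset.univ.inf' (Finset.univ_nonempty_iff.mpr ⟨p0⟩)
    (fun p : J × K => if ε p = 0 then 1 else y p / |ε p|) with hA1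
  set A2 : ℝ := Finset.univ.inf' (Finset.univ_nonempty_iff.mpr ⟨p0.1⟩)
    (fun j : J => if (∑ k : K, ε (j, k)) = 0 then 1
      else ((q j : ℝ) - ∑ k : K, y (j, k)) / |∑ k : K, ε (j, k)|) with hA2
  set A3 : ℝ := Finset.univ.inf' (Finset.univ_nonempty_iff.mpr ⟨p0.2⟩)
    (fun k : K => if (∑ j : J, ε (j, k)) = 0 then 1
      else ((i k : ℝ) - ∑ j : J, y (j, k)) / |∑ j : J, ε (j, k)|) with hA3
  set t := min A1 (min A2 A3) with htdef
  have hA1pos : 0 < A1 := by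
    rw [hA1, Finset.lt_inf'_iff]
    intro p _
    by_cases hp : ε p = 0
    · simp [hp]
    · rw [if_neg hp]
      exact div_pos (hεpos p hp) (abs_pos.mpr hp)
  have hA2pos : 0 < A2 := by
    rw [hA2, Finset.lt_inf'_iff]
    intro j _
    by_cases hj : (∑ k : K, ε (j, k)) = 0
    · simp [hj]
    · rw [if_neg hj]
      rcases hrow j with h | h
      · exact absurd h hj
      · exact div_pos (by linarith) (abs_pos.mpr hj)
  have hA3pos : 0 < A3 := by
    rw [hA3, Finset.lt_inf'_iff]
    intro k _
    by_cases hk : (∑ j : J, ε (j, k)) = 0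
    · simp [hk]
    · rw [if_neg hk]
      rcases hcol k with h | h
      · exact absurd h hk
      · exact div_pos (by linarith) (abs_pos.mpr hk)
  have htpos : 0 < t := lt_min hA1pos (lt_min hA2pos hA3pos)
  -- both perturbations stay in the polytope
  have hmem : ∀ s : ℝ, |s| ≤ t → (fun p => y p + s * ε p) ∈ Pset q i := by
    intro s hs
    have hsnn : 0 ≤ |s| := abs_nonneg s
    refine ⟨?_, ?_, ?_⟩
    · intro p
      by_cases hp : ε p = 0
      · simpa [hp] using hy0 p
      · have h1 : t ≤ y p / |ε p| := by
          have := Finset.inf'_le (b := p)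
            (fun p : J × K => if ε p = 0 then 1 else y p / |ε p|) (Finset.mem_univ p)
          rw [if_neg hp] at this
          exact le_trans (min_le_left _ _) this
        have h2 : |s * ε p| ≤ y p := by
          rw [abs_mul]
          calc |s| * |ε p| ≤ t * |ε p| :=
                mul_le_mul_of_nonneg_right hs (abs_nonneg _)
            _ ≤ y p := by
                rw [← le_div_iff₀ (abs_pos.mpr hp)]; exact h1
        have := neg_abs_le (s * ε p)
        simp only
        linarith
    · intro j
      have hsum : ∑ k : K, (y (j, k) + s * ε (j, k)) =
          (∑ k : K, y (j, k)) + s * ∑ k : K, ε (j, k) := by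
        rw [Finset.sum_add_distrib, Finset.mul_sum]
      simp only
      rw [hsum]
      by_cases hj : (∑ k : K, ε (j, k)) = 0
      · rw [hj, mul_zero, add_zero]; exact hyq j
      · have h1 : t ≤ ((q j : ℝ) - ∑ k : K, y (j, k)) / |∑ k : K, ε (j, k)| := by
          have := Finset.inf'_le (b := j)
            (fun j : J => if (∑ k : K, ε (j, k)) = 0 then 1
              else ((q j : ℝ) - ∑ k : K, y (j, k)) / |∑ k : K, ε (j, k)|) (Finset.mem_univ j)
          rw [if_neg hj] at this
          exact le_trans (le_trans (min_le_right _ _) (min_le_left _ _)) this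
        have h2 : |s * ∑ k : K, ε (j, k)| ≤ (q j : ℝ) - ∑ k : K, y (j, k) := by
          rw [abs_mul]
          calc |s| * |∑ k : K, ε (j, k)| ≤ t * |∑ k : K, ε (j, k)| :=
                mul_le_mul_of_nonneg_right hs (abs_nonneg _)
            _ ≤ _ := by rw [← le_div_iff₀ (abs_pos.mpr hj)]; exact h1
        have := le_abs_self (s * ∑ k : K, ε (j, k))
        linarith
    · intro k
      have hsum : ∑ j : J, (y (j, k) + s * ε (j, k)) =
          (∑ j : J, y (j, k)) + s * ∑ j : J, ε (j, k) := by
        rw [Finset.sum_add_distrib, Finset.mul_sum]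
      simp only
      rw [hsum]
      by_cases hk : (∑ j : J, ε (j, k)) = 0
      · rw [hk, mul_zero, add_zero]; exact hyi k
      · have h1 : t ≤ ((i k : ℝ) - ∑ j : J, y (j, k)) / |∑ j : J, ε (j, k)| := by
          have := Finset.inf'_le (b := k)
            (fun k : K => if (∑ j : J, ε (j, k)) = 0 then 1
              else ((i k : ℝ) - ∑ j : J, y (j, k)) / |∑ j : J, ε (j, k)|) (Finset.mem_univ k)
          rw [if_neg hk] at this
          exact le_trans (le_trans (min_le_right _ _) (min_le_right _ _)) this
        have h2 : |s * ∑ j : J, ε (j, k)| ≤ (i k : ℝ) - ∑ j : J, y (j, k) := by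
          rw [abs_mul]
          calc |s| * |∑ j : J, ε (j, k)| ≤ t * |∑ j : J, ε (j, k)| :=
                mul_le_mul_of_nonneg_right hs (abs_nonneg _)
            _ ≤ _ := by rw [← le_div_iff₀ (abs_pos.mpr hk)]; exact h1
        have := le_abs_self (s * ∑ j : J, ε (j, k))
        linarith
  have hx1 := hmem t (le_of_eq (abs_of_pos htpos))
  have hx2 := hmem (-t) (le_of_eq (by rw [abs_neg, abs_of_pos htpos]))
  have hseg : y ∈ openSegment ℝ (fun p => y p + t * ε p) (fun p => y p + (-t) * ε p) := by
    refine ⟨1/2, 1/2, by norm_num, by norm_num, by norm_num, ?_⟩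
    funext p
    simp only [Pi.add_apply, Pi.smul_apply, smul_eq_mul]
    ring
  have hex := hy.2 hx1 hx2 hseg
  apply hεne
  funext p
  have h3 : y p + t * ε p = y p := congrFun hex p
  have h4 : t * ε p = 0 := by linarith
  rcases mul_eq_zero.mp h4 with h | h
  · exact absurd h (ne_of_gt htpos)
  · exact h

end Main

section Part2
variable {J K : Type*} [Fintype J] [Fintype K] [Nonempty J] [Nonempty K]

lemma Pset_isCompact (q : J → ℤ) (i : K → ℤ) : IsCompact (Pset q i) := by
  have hclosed : IsClosed (Pset q i) := by
    have h1 : IsClosed {y : J × K → ℝ | ∀ p, 0 ≤ y p} := by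
      rw [Set.setOf_forall]
      exact isClosed_iInter fun p => isClosed_le continuous_const (continuous_apply p)
    have h2 : IsClosed {y : J × K → ℝ | ∀ j, ∑ k : K, y (j, k) ≤ (q j : ℝ)} := by
      rw [Set.setOf_forall]
      exact isClosed_iInter fun j => isClosed_le
        (continuous_finset_sum _ fun k _ => continuous_apply (j, k)) continuous_const
    have h3 : IsClosed {y : J × K → ℝ | ∀ k, ∑ j : J, y (j, k) ≤ (i k : ℝ)} := by
      rw [Set.setOf_forall]
      exact isClosed_iInter fun k => isClosed_le
        (continuous_finset_sum _ fun j _ => continuous_apply (j, k)) continuous_const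
    exact (h1.inter (h2.inter h3))
  have hsub : Pset q i ⊆ Set.pi Set.univ (fun p : J × K => Set.Icc (0:ℝ) (q p.1)) := by
    rintro y ⟨h0, hq', _⟩ p _
    refine ⟨h0 p, ?_⟩
    calc y p ≤ ∑ k : K, y (p.1, k) := by
          refine Finset.single_le_sum (fun k _ => h0 (p.1, k)) (Finset.mem_univ p.2)
      _ ≤ (q p.1 : ℝ) := hq' p.1
  exact (isCompact_univ_pi fun p => isCompact_Icc).of_isClosed_subset hclosed hsub

lemma zero_mem_Pset (q : J → ℤ) (i : K → ℤ) (hq : ∀ j, 0 ≤ q j) (hi : ∀ k, 0 ≤ i k) :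
    (0 : J × K → ℝ) ∈ Pset q i := by
  refine ⟨fun p => le_refl 0, fun j => ?_, fun k => ?_⟩ <;> simp
  · exact_mod_cast hq j
  · exact_mod_cast hi k

end Part2

/-- Lemma (integrality): every extreme point of `P` is integer valued, and consequently,
for any objective weights `v`, the integer program maximizing `Σ v_{jk} y_{jk}` over the
integer points of `P` has the same optimal value as its LP relaxation over `P`. -/
theorem extremePoints_integral_and_IP_eq_LP
    {J K : Type*} [Fintype J] [Fintype K] [Nonempty J] [Nonempty K]
    (q : J → ℤ) (i : K → ℤ) (hq : ∀ j, 0 ≤ q j) (hi : ∀ k, 0 ≤ i k) :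
    (∀ y ∈ Set.extremePoints ℝ (Pset q i), ∀ p : J × K, ∃ z : ℤ, y p = (z : ℝ)) ∧
    (∀ v : J × K → ℝ,
      sSup ((fun y : J × K → ℝ => ∑ p : J × K, v p * y p) ''
          {y ∈ Pset q i | ∀ p : J × K, ∃ z : ℤ, y p = (z : ℝ)}) =
        sSup ((fun y : J × K → ℝ => ∑ p : J × K, v p * y p) '' Pset q i)) := by
  refine ⟨fun y hy p => extreme_integral q i y hy p, fun v => ?_⟩
  set f : (J × K → ℝ) → ℝ := fun y => ∑ p : J × K, v p * y p with hf
  have hfc : Continuous f :=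
    continuous_finset_sum _ fun p _ => continuous_const.mul (continuous_apply p)
  have hPc := Pset_isCompact q i
  have hPne : (Pset q i).Nonempty := ⟨0, zero_mem_Pset q i hq hi⟩
  have hAc : IsCompact (f '' Pset q i) := hPc.image hfc
  have hAne : (f '' Pset q i).Nonempty := hPne.image f
  have hAbdd : BddAbove (f '' Pset q i) := hAc.bddAbove
  set c := sSup (f '' Pset q i) with hc
  have hcA : c ∈ f '' Pset q i := hAc.sSup_mem hAne
  set M : Set (J × K → ℝ) := {y ∈ Pset q i | f y = c} with hM
  have hMne : M.Nonempty := by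
    obtain ⟨y, hyP, hyf⟩ := hcA
    exact ⟨y, hyP, hyf⟩
  have hMc : IsCompact M := by
    have hMeq : M = Pset q i ∩ f ⁻¹' {c} := by
      ext y; simp [hM, Set.mem_setOf_eq]
    rw [hMeq]
    exact hPc.inter_right (isClosed_singleton.preimage hfc)
  obtain ⟨y0, hy0M⟩ := hMc.extremePoints_nonempty hMne
  have hy0P : y0 ∈ Set.extremePoints ℝ (Pset q i) := by
    refine ⟨hy0M.1.1, fun x₁ hx₁ x₂ hx₂ hseg => ?_⟩
    have hfx₁ : f x₁ ≤ c := le_csSup hAbdd (Set.mem_image_of_mem f hx₁)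
    have hfx₂ : f x₂ ≤ c := le_csSup hAbdd (Set.mem_image_of_mem f hx₂)
    obtain ⟨u, w, hu, hw, huw, hsum⟩ := hseg
    have hfy : f y0 = c := hy0M.1.2
    have hflin : f (u • x₁ + w • x₂) = u * f x₁ + w * f x₂ := by
      simp only [hf, Pi.add_apply, Pi.smul_apply, smul_eq_mul]
      rw [Finset.mul_sum, Finset.mul_sum, ← Finset.sum_add_distrib]
      exact Finset.sum_congr rfl fun p _ => by ring
    rw [hsum, hfy] at hflin
    have hcc : u * c + w * c = c := by rw [← add_mul, huw, one_mul]
    have hfx1c : f x₁ = c := by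
      by_contra hne
      have h1 : f x₁ < c := lt_of_le_of_ne hfx₁ hne
      have h2 := mul_lt_mul_of_pos_left h1 hu
      have h3 := mul_le_mul_of_nonneg_left hfx₂ (le_of_lt hw)
      linarith
    have hfx2c : f x₂ = c := by
      by_contra hne
      have h1 : f x₂ < c := lt_of_le_of_ne hfx₂ hne
      have h2 := mul_lt_mul_of_pos_left h1 hw
      have h3 := mul_le_mul_of_nonneg_left hfx₁ (le_of_lt hu)
      linarith
    exact hy0M.2 ⟨hx₁, hfx1c⟩ ⟨hx₂, hfx2c⟩ ⟨u, w, hu, hw, huw, hsum⟩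
  have hy0int : ∀ p : J × K, ∃ z : ℤ, y0 p = (z : ℝ) := extreme_integral q i y0 hy0P
  have hsubset : {y ∈ Pset q i | ∀ p : J × K, ∃ z : ℤ, y p = (z : ℝ)} ⊆ Pset q i :=
    fun y hy => hy.1
  have hbdd2 : BddAbove (f '' {y ∈ Pset q i | ∀ p : J × K, ∃ z : ℤ, y p = (z : ℝ)}) :=
    hAbdd.mono (Set.image_mono (f := f) hsubset)
  apply le_antisymm
  · apply csSup_le_csSup hAbdd
    · exact ⟨f 0, Set.mem_image_of_mem f
        ⟨zero_mem_Pset q i hq hi, fun p => ⟨0, by simp⟩⟩⟩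
    · exact Set.image_mono (f := f) hsubset
  · calc c = f y0 := hy0M.1.2.symm
      _ ≤ _ := le_csSup hbdd2 (Set.mem_image_of_mem f ⟨hy0M.1.1, hy0int⟩)
end

section
/- Let λ, μ, θ > 0. Both series Σ_{x=1}^∞ λ^x / ∏_{j=1}^x (μ + jθ) and Σ_{x=1}^∞ μ^x / ∏_{j=1}^x (λ + jθ) converge; set π₀ = (1 + Σ_{x=1}^∞ λ^x/∏_{j=1}^x(μ+jθ) + Σ_{x=1}^∞ μ^x/∏_{j=1}^x(λ+jθ))^{-1} and define π : ℤ → ℝ by π(0) = π₀, π(x) = π₀·λ^x/∏_{j=1}^x(μ+jθ) for x > 0, and π(−x) = π₀·μ^x/∏_{j=1}^x(λ+jθ) for x > 0. Then π is a probability distribution on ℤ (π ≥ 0 and Σ_{x∈ℤ} π(x) = 1) and π satisfies the balance equations of the birth–death chain: for every integer x ≥ 1, (λ + μ + xθ)·π(x) = λ·π(x−1) + (μ + (x+1)θ)·π(x+1) and (λ + μ + xθ)·π(−x) = μ·π(−x+1) + (λ + (x+1)θ)·π(−x−1), and (λ + μ)·π(0) = (λ + θ)·π(−1) + (μ + θ)·π(1).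 -/
/-- The term `λ^x / ∏_{j=1}^x (μ + jθ)` (equal to `1` when `x = 0`). -/
noncomputable def termA (lam mu θ : ℝ) (x : ℕ) : ℝ :=
  lam ^ x / ∏ j ∈ Finset.Icc 1 x, (mu + (j : ℝ) * θ)

/-- The distribution `π` on `ℤ`: `π 0 = π₀`,
`π x = π₀ λ^x/∏_{j=1}^x(μ+jθ)` for `x > 0`, and
`π (−x) = π₀ μ^x/∏_{j=1}^x(λ+jθ)` for `x > 0`, where `π₀` is the normalizing constant. -/
noncomputable def piDist (lam mu θ : ℝ) (x : ℤ) : ℝ :=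
  (1 + (∑' x : ℕ, termA lam mu θ (x + 1)) + (∑' x : ℕ, termA mu lam θ (x + 1)))⁻¹ *
    (if 0 ≤ x then termA lam mu θ x.toNat else termA mu lam θ (-x).toNat)

lemma prodIcc_pos (m θ : ℝ) (hm : 0 < m) (hθ : 0 < θ) (n : ℕ) :
    0 < ∏ j ∈ Finset.Icc 1 n, (m + (j : ℝ) * θ) := by
  apply Finset.prod_pos
  intro j _
  have : (0:ℝ) ≤ (j : ℝ) * θ := by positivity
  linarith

lemma termA_pos (l m θ : ℝ) (hl : 0 < l) (hm : 0 < m) (hθ : 0 < θ) (n : ℕ) :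
    0 < termA l m θ n :=
  div_pos (pow_pos hl n) (prodIcc_pos m θ hm hθ n)

lemma termA_zero (l m θ : ℝ) : termA l m θ 0 = 1 := by
  simp [termA]

lemma termA_succ (l m θ : ℝ) (hm : 0 < m) (hθ : 0 < θ) (n : ℕ) :
    termA l m θ (n + 1) = termA l m θ n * (l / (m + ((n : ℝ) + 1) * θ)) := by
  unfold termA
  rw [Finset.prod_Icc_succ_top (Nat.le_add_left 1 n) (fun j => m + (j : ℝ) * θ)]
  have h1 := prodIcc_pos m θ hm hθ n
  have h2 : (0:ℝ) < m + ((n : ℝ) + 1) * θ := by positivity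
  push_cast
  rw [pow_succ]
  field_simp
  congr 1
  exact Finset.prod_congr rfl (fun x _ => by ring)

lemma termA_balance (l m θ : ℝ) (hm : 0 < m) (hθ : 0 < θ) (n : ℕ) :
    (m + ((n : ℝ) + 1) * θ) * termA l m θ (n + 1) = l * termA l m θ n := by
  have h2 : (0:ℝ) < m + ((n : ℝ) + 1) * θ := by positivity
  rw [termA_succ l m θ hm hθ n]
  field_simp

lemma termA_summable (l m θ : ℝ) (hl : 0 < l) (hm : 0 < m) (hθ : 0 < θ) :
    Summable (termA l m θ) := by
  apply summable_of_ratio_norm_eventually_le (r := 1/2) (by norm_num)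
  filter_upwards [Filter.eventually_ge_atTop ⌈2 * l / θ⌉₊] with n hn
  have hn' : 2 * l / θ ≤ (n : ℝ) := (Nat.ceil_le).mp hn
  have hnθ : 2 * l ≤ (n : ℝ) * θ := by
    rw [div_le_iff₀ hθ] at hn'; linarith
  have hT := termA_pos l m θ hl hm hθ n
  have hT1 := termA_pos l m θ hl hm hθ (n + 1)
  have h2 : (0:ℝ) < m + ((n : ℝ) + 1) * θ := by positivity
  rw [Real.norm_eq_abs, Real.norm_eq_abs, abs_of_pos hT1, abs_of_pos hT,
    termA_succ l m θ hm hθ n]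
  rw [mul_comm (1/2 : ℝ)]
  apply mul_le_mul_of_nonneg_left _ hT.le
  rw [div_le_iff₀ h2]
  nlinarith

/-- The series defining `π₀` converge, `π` is a probability distribution on `ℤ`, and `π`
satisfies the balance equations of the birth–death chain. -/
theorem piDist_is_stationary (lam mu θ : ℝ) (hlam : 0 < lam) (hmu : 0 < mu) (hθ : 0 < θ) :
    Summable (fun x : ℕ => termA lam mu θ (x + 1)) ∧
    Summable (fun x : ℕ => termA mu lam θ (x + 1)) ∧
    (∀ x : ℤ, 0 ≤ piDist lam mu θ x) ∧
    (∑' x : ℤ, piDist lam mu θ x) = 1 ∧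
    (∀ x : ℤ, 1 ≤ x →
      (lam + mu + (x : ℝ) * θ) * piDist lam mu θ x =
        lam * piDist lam mu θ (x - 1) +
          (mu + ((x : ℝ) + 1) * θ) * piDist lam mu θ (x + 1)) ∧
    (∀ x : ℤ, 1 ≤ x →
      (lam + mu + (x : ℝ) * θ) * piDist lam mu θ (-x) =
        mu * piDist lam mu θ (-x + 1) +
          (lam + ((x : ℝ) + 1) * θ) * piDist lam mu θ (-x - 1)) ∧
    (lam + mu) * piDist lam mu θ 0 =
      (lam + θ) * piDist lam mu θ (-1) + (mu + θ) * piDist lam mu θ 1 := by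
  have hAfull := termA_summable lam mu θ hlam hmu hθ
  have hBfull := termA_summable mu lam θ hmu hlam hθ
  have hA : Summable (fun x : ℕ => termA lam mu θ (x + 1)) :=
    (summable_nat_add_iff 1).mpr hAfull
  have hB : Summable (fun x : ℕ => termA mu lam θ (x + 1)) :=
    (summable_nat_add_iff 1).mpr hBfull
  set A := ∑' x : ℕ, termA lam mu θ (x + 1) with hAdef
  set B := ∑' x : ℕ, termA mu lam θ (x + 1) with hBdef
  have hA0 : 0 ≤ A := tsum_nonneg fun n => (termA_pos lam mu θ hlam hmu hθ (n + 1)).le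
  have hB0 : 0 ≤ B := tsum_nonneg fun n => (termA_pos mu lam θ hmu hlam hθ (n + 1)).le
  have hcpos : (0:ℝ) < 1 + A + B := by linarith
  have hcne : (1 + A + B : ℝ) ≠ 0 := ne_of_gt hcpos
  -- rewriting lemmas for piDist
  have hcoe : ∀ n : ℕ, piDist lam mu θ (n : ℤ) = (1 + A + B)⁻¹ * termA lam mu θ n := by
    intro n
    simp [piDist, ← hAdef, ← hBdef]
  have hneg : ∀ n : ℕ, piDist lam mu θ (-(n : ℤ)) = (1 + A + B)⁻¹ * termA mu lam θ n := by
    intro n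
    rcases n with _ | k
    · simpa [piDist, ← hAdef, ← hBdef] using (termA_zero mu lam θ).symm ▸
        (by simp [piDist, ← hAdef, ← hBdef, termA_zero])
    · have h1 : ¬ (0:ℤ) ≤ -((k:ℤ) + 1) := by omega
      simp only [piDist, ← hAdef, ← hBdef]
      rw [if_neg (by push_cast; omega)]
      norm_num
  refine ⟨hA, hB, ?_, ?_, ?_, ?_, ?_⟩
  · -- nonnegativity
    intro x
    unfold piDist
    rw [← hAdef, ← hBdef]
    apply mul_nonneg (inv_nonneg.mpr hcpos.le)
    split_ifs
    · exact (termA_pos lam mu θ hlam hmu hθ _).le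
    · exact (termA_pos mu lam θ hmu hlam hθ _).le
  · -- sums to 1
    have hsumA : ∑' n : ℕ, termA lam mu θ n = 1 + A := by
      rw [Summable.tsum_eq_zero_add hAfull, termA_zero, ← hAdef]
    have hf : HasSum (fun n : ℕ => (1 + A + B)⁻¹ * termA lam mu θ n)
        ((1 + A + B)⁻¹ * (1 + A)) := by
      have := hAfull.hasSum
      rw [hsumA] at this
      exact this.mul_left _
    have hg : HasSum (fun n : ℕ => (1 + A + B)⁻¹ * termA mu lam θ (n + 1))
        ((1 + A + B)⁻¹ * B) := hB.hasSum.mul_left _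
    have hZ : HasSum (fun x : ℤ => piDist lam mu θ x)
        ((1 + A + B)⁻¹ * (1 + A) + (1 + A + B)⁻¹ * B) := by
      have h := hf.int_rec hg
      convert h using 1
      funext x
      rcases x with n | n
      · exact hcoe n
      · have h2 := hneg (n + 1)
        rw [show (-((n + 1 : ℕ) : ℤ)) = Int.negSucc n by simp [Int.negSucc_eq]] at h2
        exact h2
    rw [hZ.tsum_eq]
    field_simp
  · -- positive balance
    intro x hx
    lift x to ℕ using (by linarith : (0:ℤ) ≤ x)
    have hx' : 1 ≤ x := by exact_mod_cast hx
    obtain ⟨k, rfl⟩ := Nat.exists_eq_add_of_le hx'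
    have e1 : ((1 + k : ℕ) : ℤ) - 1 = (k : ℤ) := by push_cast; ring
    have e2 : ((1 + k : ℕ) : ℤ) + 1 = ((k + 2 : ℕ) : ℤ) := by push_cast; ring
    rw [e1, e2, hcoe, hcoe, hcoe]
    have db1 := termA_balance lam mu θ hmu hθ k
    have db2 := termA_balance lam mu θ hmu hθ (k + 1)
    rw [show k + 1 + 1 = k + 2 from rfl] at db2
    have ecast : (((1 + k : ℕ) : ℤ) : ℝ) = (k : ℝ) + 1 := by push_cast; ring
    rw [ecast]
    have e3 : (1 + k : ℕ) = k + 1 := by omega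
    rw [e3]
    push_cast at db2 ⊢
    linear_combination (1 + A + B)⁻¹ * db1 - (1 + A + B)⁻¹ * db2
  · -- negative balance
    intro x hx
    lift x to ℕ using (by linarith : (0:ℤ) ≤ x)
    have hx' : 1 ≤ x := by exact_mod_cast hx
    obtain ⟨k, rfl⟩ := Nat.exists_eq_add_of_le hx'
    have e1 : -((1 + k : ℕ) : ℤ) + 1 = -(k : ℤ) := by push_cast; ring
    have e2 : -((1 + k : ℕ) : ℤ) - 1 = -((k + 2 : ℕ) : ℤ) := by push_cast; ring
    rw [e1, e2, hneg, hneg, hneg]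
    have db1 := termA_balance mu lam θ hlam hθ k
    have db2 := termA_balance mu lam θ hlam hθ (k + 1)
    rw [show k + 1 + 1 = k + 2 from rfl] at db2
    have ecast : (((1 + k : ℕ) : ℤ) : ℝ) = (k : ℝ) + 1 := by push_cast; ring
    rw [ecast]
    have e3 : (1 + k : ℕ) = k + 1 := by omega
    rw [e3]
    push_cast at db2 ⊢
    linear_combination (1 + A + B)⁻¹ * db1 - (1 + A + B)⁻¹ * db2
  · -- center balance
    have h0 : piDist lam mu θ 0 = (1 + A + B)⁻¹ * 1 := by
      simpa [termA_zero] using hcoe 0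
    have h1 : piDist lam mu θ 1 = (1 + A + B)⁻¹ * termA lam mu θ 1 := hcoe 1
    have hm1 : piDist lam mu θ (-1) = (1 + A + B)⁻¹ * termA mu lam θ 1 := hneg 1
    have db1 := termA_balance lam mu θ hmu hθ 0
    have db2 := termA_balance mu lam θ hlam hθ 0
    rw [termA_zero] at db1 db2
    push_cast at db1 db2
    rw [h0, h1, hm1]
    linear_combination (-(1 + A + B)⁻¹) * db1 - (1 + A + B)⁻¹ * db2
end
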